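/- arXiv:2305.05820 — 9 statements merged into one kernel-verified Lean document; each statement's English description precedes it below -/
import Mathlib

section
/- Let α > 0 and β > 0 be real numbers with β < 2α + 1. For each integer n ≥ 2 set m = ⌈n^α⌉ and k = ⌈β·log₂ n⌉. Then liminf_{n→∞} Pr( there exist indices i < j and a position a with x_i(a) = x_j(a) ) ≥ 1/4. -/
/-!
Cut the strings into `⌊n / k⌋` aligned blocks of length `k` and, for rows `i < j` and a block
`b`, let `A(i,j,b)` be the event that rows `i` and `j` agree on block `b`. Over `Bool` with xor,
`A(i,j,b)` is the kernel of a surjective additive map onto `Bool^k`, so it has probability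
`2^-k`; for two distinct such events the product map is still surjective, since each event
reads a row-block that the other one does not, so the events are pairwise independent.
Once `C(m,2) ⌊n/k⌋ ≥ 2^(k-1)`, which holds for large `n` because `β < 2α + 1`, choose
`N = 2^(k-1)` of them: the second Bonferroni inequality gives
`P(D) ≥ N 2^-k - (N 2^-k)^2 / 2 = 3/8`.
-/

/-- The symbol of `x` at (0-indexed) position `t`, with junk value `false` out of range. -/
def get {n : ℕ} (x : Fin n → Bool) (t : ℕ) : Bool :=
  if h : t < n then x ⟨t, h⟩ else false

/-- The `k`-mer of `x` starting at (0-indexed) position `a`. -/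
def kmer {n : ℕ} (k : ℕ) (x : Fin n → Bool) (a : ℕ) : Fin k → Bool :=
  fun t => get x (a + t.val)

/-- Event D: two distinct strings of the family share a `k`-mer at a common position. -/
def eventD {n : ℕ} (m k : ℕ) (X : Fin m → Fin n → Bool) : Prop :=
  ∃ i j : Fin m, i < j ∧ ∃ a : ℕ, a + k ≤ n ∧ kmer k (X i) a = kmer k (X j) a

/-- Probability of an event under the uniform distribution on a finite sample space. -/
noncomputable def prob {Ω : Type*} [Fintype Ω] (p : Ω → Prop) : ℝ :=
  (Nat.card {ω // p ω} : ℝ) / (Fintype.card Ω : ℝ)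

open Finset

section UniformProbability

variable {Ω : Type*} [Fintype Ω]

lemma prob_mono {p q : Ω → Prop} (h : ∀ ω, p ω → q ω) : prob p ≤ prob q := by
  unfold prob
  gcongr
  exact Nat.card_mono (Set.toFinite _) h

lemma prob_le_one (p : Ω → Prop) : prob p ≤ 1 := by
  refine div_le_one_of_le₀ ?_ (Nat.cast_nonneg _)
  rw [← Nat.card_eq_fintype_card]
  exact_mod_cast Nat.card_le_card_of_injective _ Subtype.val_injective

lemma prob_eq_sum_ite (p : Ω → Prop) [DecidablePred p] :
    prob p = (∑ ω, if p ω then (1 : ℝ) else 0) / Fintype.card Ω := by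
  rw [prob, sum_boole, Nat.card_eq_fintype_card, Fintype.card_subtype]

lemma prob_apply_eq_zero_eq_inv_card {G H : Type*} [AddGroup G] [Fintype G] [AddGroup H]
    (f : G →+ H) (hf : Function.Surjective f) :
    prob (fun x => f x = 0) = (Nat.card H : ℝ)⁻¹ := by
  have hker := f.ker.card_mul_index
  rw [AddSubgroup.index_ker, AddMonoidHom.range_eq_top.mpr hf, AddSubgroup.card_top] at hker
  have hG : (Nat.card f.ker : ℝ) ≠ 0 := by exact_mod_cast Nat.card_pos.ne'
  change (Nat.card f.ker : ℝ) / _ = _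
  rw [← Nat.card_eq_fintype_card, ← hker, Nat.cast_mul, div_mul_cancel_left₀ hG]

end UniformProbability

theorem AddMonoidHom.prod_surjective_of {G H K : Type*} [AddZeroClass G] [AddZeroClass H]
    [AddZeroClass K] (f : G →+ H) (g : G →+ K) (hf : ∀ u, ∃ x, f x = u ∧ g x = 0)
    (hg : ∀ v, ∃ y, f y = 0 ∧ g y = v) : Function.Surjective (f.prod g) := by
  rintro ⟨u, v⟩
  obtain ⟨x, hfx, hgx⟩ := hf u
  obtain ⟨y, hfy, hgy⟩ := hg v
  exact ⟨x + y, by simp [hfx, hgx, hfy, hgy]⟩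

lemma Finset.offDiag_filter {ι : Type*} (s : Finset ι) (P : ι → Prop) [DecidablePred P] :
    (s.filter P).offDiag = s.offDiag.filter (fun q => P q.1 ∧ P q.2) := by
  ext; simp only [mem_offDiag, mem_filter]; tauto

section Bonferroni

variable {Ω ι : Type*} [Fintype Ω]

lemma sum_boole_sub_half_sum_offDiag_le (s : Finset ι) (P : ι → Prop) [DecidablePred P] :
    (∑ e ∈ s, if P e then (1 : ℝ) else 0)
        - (∑ q ∈ s.offDiag, if P q.1 ∧ P q.2 then (1 : ℝ) else 0) / 2
      ≤ if ∃ e ∈ s, P e then 1 else 0 := by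
  rw [sum_boole, sum_boole, ← offDiag_filter, offDiag_card]
  set T := #(s.filter P)
  have hTT : T ≤ T * T := Nat.le_mul_self T
  push_cast [hTT]
  split_ifs with h
  · have hT : 1 ≤ T := by
      obtain ⟨e, he, hPe⟩ := h
      exact card_pos.mpr ⟨e, mem_filter.mpr ⟨he, hPe⟩⟩
    -- `T - T (T - 1) / 2 ≤ 1` amounts to `(T - 1) (T - 2) ≥ 0`, true for integers `T ≥ 1`
    obtain hT1 | hT2 : T = 1 ∨ 2 ≤ T := by omega
    · simp [hT1]
    · have : (2 : ℝ) ≤ T := by exact_mod_cast hT2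
      nlinarith
  · have hT : T = 0 := by
      simp only [T, card_eq_zero, filter_eq_empty_iff]
      exact fun e he hPe => h ⟨e, he, hPe⟩
    simp [hT]

theorem sum_prob_sub_half_sum_offDiag_le_prob_exists (s : Finset ι) (A : ι → Ω → Prop) :
    ∑ e ∈ s, prob (A e) - (∑ q ∈ s.offDiag, prob (fun ω => A q.1 ω ∧ A q.2 ω)) / 2
      ≤ prob (fun ω => ∃ e ∈ s, A e ω) := by
  classical
  simp only [prob_eq_sum_ite, ← sum_div]
  rw [sum_comm, sum_comm (s := s.offDiag)]
  calc _ = (∑ ω, ((∑ e ∈ s, if A e ω then (1 : ℝ) else 0)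
          - (∑ q ∈ s.offDiag, if A q.1 ω ∧ A q.2 ω then (1 : ℝ) else 0) / 2))
          / Fintype.card Ω := by
        rw [sum_sub_distrib, ← sum_div]; ring
    _ ≤ _ := by
      gcongr with ω
      exact sum_boole_sub_half_sum_offDiag_le s (A · ω)

theorem le_prob_exists_of_pairwise_indep (s : Finset ι) (A : ι → Ω → Prop) {p : ℝ}
    (h₁ : ∀ e ∈ s, prob (A e) = p)
    (h₂ : ∀ q ∈ s.offDiag, prob (fun ω => A q.1 ω ∧ A q.2 ω) = p ^ 2) :
    #s * p - (#s * p) ^ 2 / 2 ≤ prob (fun ω => ∃ e ∈ s, A e ω) := by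
  refine le_trans ?_ (sum_prob_sub_half_sum_offDiag_le_prob_exists s A)
  rw [sum_congr rfl h₁, sum_congr rfl h₂, sum_const, sum_const, offDiag_card, nsmul_eq_mul,
    nsmul_eq_mul, Nat.cast_sub (Nat.le_mul_self _)]
  push_cast
  nlinarith [sq_nonneg p]

end Bonferroni

section Kmers

variable {m n k : ℕ}

lemma get_add (x y : Fin n → Bool) (t : ℕ) : get (x + y) t = get x t + get y t := by
  unfold _root_.get; split_ifs <;> rfl

/-- `kmer k · a` is additive; the additive group structure of `Bool` is xor. -/
def kmerHom (k a : ℕ) : (Fin n → Bool) →+ (Fin k → Bool) where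
  toFun x := kmer k x a
  map_zero' := by funext t; simp only [kmer, _root_.get]; split_ifs <;> rfl
  map_add' x y := funext fun t => get_add x y _

lemma kmerHom_apply (a : ℕ) (x : Fin n → Bool) : kmerHom k a x = kmer k x a := rfl

def placeAt (a : ℕ) (u : Fin k → Bool) : Fin n → Bool :=
  fun p => if h : a ≤ p ∧ p < a + k then u ⟨p - a, by omega⟩ else 0

lemma kmer_placeAt_self {a : ℕ} (ha : a + k ≤ n) (u : Fin k → Bool) :
    kmer k (placeAt a u : Fin n → Bool) a = u := by
  funext t
  have ht := t.isLt
  simp only [kmer, _root_.get, placeAt, dif_pos (show a + t < n by omega),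
    dif_pos (show a ≤ a + t ∧ a + t < a + k by omega), Nat.add_sub_cancel_left]

lemma kmer_placeAt_of_disjoint {a a' : ℕ} (h : a + k ≤ a' ∨ a' + k ≤ a) (u : Fin k → Bool) :
    kmer k (placeAt a u : Fin n → Bool) a' = 0 := by
  funext t
  have ht := t.isLt
  simp only [kmer, _root_.get, placeAt]
  split_ifs <;> first | rfl | omega

def kmerDiff (k : ℕ) (i j : Fin m) (a : ℕ) : (Fin m → Fin n → Bool) →+ (Fin k → Bool) :=
  (kmerHom k a).comp (Pi.evalAddMonoidHom _ i) + (kmerHom k a).comp (Pi.evalAddMonoidHom _ j)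

lemma kmerDiff_apply (i j : Fin m) (a : ℕ) (X : Fin m → Fin n → Bool) :
    kmerDiff k i j a X = kmer k (X i) a + kmer k (X j) a := rfl

lemma kmerDiff_eq_zero_iff (i j : Fin m) (a : ℕ) (X : Fin m → Fin n → Bool) :
    kmerDiff k i j a X = 0 ↔ kmer k (X i) a = kmer k (X j) a := by
  rw [kmerDiff_apply]
  -- negation on `Bool` is the identity
  exact add_eq_zero_iff_eq_neg

lemma kmerDiff_single_placeAt {i j c : Fin m} (hij : i ≠ j) (hc : c = i ∨ c = j) {a : ℕ}
    (ha : a + k ≤ n) (u : Fin k → Bool) :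
    kmerDiff k i j a (Pi.single c (placeAt a u) : Fin m → Fin n → Bool) = u := by
  rcases hc with rfl | rfl
  · rw [kmerDiff_apply, Pi.single_eq_same, Pi.single_eq_of_ne' hij, kmer_placeAt_self ha,
      ← kmerHom_apply, map_zero, add_zero]
  · rw [kmerDiff_apply, Pi.single_eq_same, Pi.single_eq_of_ne hij, kmer_placeAt_self ha,
      ← kmerHom_apply, map_zero, zero_add]

lemma kmerDiff_single_placeAt_eq_zero {i j c : Fin m} {a a' : ℕ}
    (h : c ≠ i ∧ c ≠ j ∨ a + k ≤ a' ∨ a' + k ≤ a) (u : Fin k → Bool) :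
    kmerDiff k i j a' (Pi.single c (placeAt a u : Fin n → Bool)) = 0 := by
  have hrow : ∀ l, l = i ∨ l = j →
      kmer k ((Pi.single c (placeAt a u) : Fin m → Fin n → Bool) l) a' = 0 := by
    intro l hl
    by_cases hlc : l = c
    · subst hlc
      rw [Pi.single_eq_same]
      exact kmer_placeAt_of_disjoint (h.resolve_left (by tauto)) u
    · rw [Pi.single_eq_of_ne hlc, ← kmerHom_apply, map_zero]
  rw [kmerDiff_apply, hrow i (.inl rfl), hrow j (.inr rfl), add_zero]

lemma kmerDiff_surjective {i j : Fin m} (hij : i ≠ j) {a : ℕ} (ha : a + k ≤ n) :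
    Function.Surjective (kmerDiff (n := n) k i j a) :=
  fun u => ⟨_, kmerDiff_single_placeAt hij (.inr rfl) ha u⟩

lemma prob_kmer_eq {i j : Fin m} (hij : i ≠ j) {a : ℕ} (ha : a + k ≤ n) :
    prob (fun X : Fin m → Fin n → Bool => kmer k (X i) a = kmer k (X j) a)
      = ((2 : ℝ) ^ k)⁻¹ := by
  simp_rw [← kmerDiff_eq_zero_iff]
  rw [prob_apply_eq_zero_eq_inv_card _ (kmerDiff_surjective hij ha)]
  simp

/-- Two aligned-match events are independent as soon as each of them reads a row-window
the other one does not. -/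
lemma prob_kmer_eq_and_kmer_eq {i j i' j' : Fin m} (hij : i ≠ j) (hij' : i' ≠ j') {a a' : ℕ}
    (ha : a + k ≤ n) (ha' : a' + k ≤ n)
    (hfree : ∃ c, (c = i ∨ c = j) ∧ (c ≠ i' ∧ c ≠ j' ∨ a + k ≤ a' ∨ a' + k ≤ a))
    (hfree' : ∃ c, (c = i' ∨ c = j') ∧ (c ≠ i ∧ c ≠ j ∨ a' + k ≤ a ∨ a + k ≤ a')) :
    prob (fun X : Fin m → Fin n → Bool =>
        kmer k (X i) a = kmer k (X j) a ∧ kmer k (X i') a' = kmer k (X j') a')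
      = ((2 : ℝ) ^ k)⁻¹ ^ 2 := by
  obtain ⟨c, hc, hc_free⟩ := hfree
  obtain ⟨c', hc', hc'_free⟩ := hfree'
  have hsurj : Function.Surjective ((kmerDiff (n := n) k i j a).prod (kmerDiff k i' j' a')) :=
    AddMonoidHom.prod_surjective_of _ _
      (fun u => ⟨_, kmerDiff_single_placeAt hij hc ha u,
        kmerDiff_single_placeAt_eq_zero hc_free u⟩)
      (fun v => ⟨_, kmerDiff_single_placeAt_eq_zero hc'_free v,
        kmerDiff_single_placeAt hij' hc' ha' v⟩)
  simp_rw [← kmerDiff_eq_zero_iff, ← Prod.mk_eq_zero, ← AddMonoidHom.prod_apply]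
  rw [prob_apply_eq_zero_eq_inv_card _ hsurj]
  simp [sq]

end Kmers

lemma exists_eq_or_eq_and_ne_and_ne {α : Type*} [LinearOrder α] {i j i' j' : α} (hij : i < j)
    (hij' : i' < j') (hne : (i, j) ≠ (i', j')) : ∃ c, (c = i ∨ c = j) ∧ c ≠ i' ∧ c ≠ j' := by
  by_cases hi : i ≠ i' ∧ i ≠ j'
  · exact ⟨i, .inl rfl, hi⟩
  · refine ⟨j, .inr rfl, ?_, ?_⟩ <;> rintro rfl <;> grind

lemma add_le_or_add_le_of_ne {b b' : ℕ} (h : b ≠ b') (k : ℕ) :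
    b * k + k ≤ b' * k ∨ b' * k + k ≤ b * k := by
  rcases h.lt_or_gt with h | h
  · exact .inl (by nlinarith)
  · exact .inr (by nlinarith)

lemma mul_add_le_of_lt_div {b n k : ℕ} (hb : b < n / k) : b * k + k ≤ n :=
  calc b * k + k = (b + 1) * k := by ring
    _ ≤ n / k * k := Nat.mul_le_mul_right k hb
    _ ≤ n := Nat.div_mul_le_self n k

section AlignedFamily

variable {m n k : ℕ}

/-- Row pairs `i < j` and blocks `b`, standing for the test event that rows `i` and `j` share
the `k`-mer at position `b k`; these windows are disjoint for distinct blocks. -/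
def alignedPairs (m n k : ℕ) : Finset ((Fin m × Fin m) × Fin (n / k)) :=
  univ.filter (fun p : Fin m × Fin m => p.1 < p.2) ×ˢ univ

lemma card_alignedPairs : #(alignedPairs m n k) = m.choose 2 * (n / k) := by
  rw [alignedPairs, card_product, ← univ_product_univ, card_product_filter_lt, card_univ,
    card_univ, Fintype.card_fin, Fintype.card_fin]

theorem three_eighths_le_prob_eventD (hk : 1 ≤ k) (hN : 2 ^ (k - 1) ≤ m.choose 2 * (n / k)) :
    3 / 8 ≤ prob (eventD (n := n) m k) := by
  obtain ⟨E, hES, hE⟩ := exists_subset_card_eq (hN.trans card_alignedPairs.ge)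
  set A := fun (e : (Fin m × Fin m) × Fin (n / k)) (X : Fin m → Fin n → Bool) =>
    kmer k (X e.1.1) (e.2 * k) = kmer k (X e.1.2) (e.2 * k)
  have hrows : ∀ e ∈ E, e.1.1 < e.1.2 := fun e he =>
    (mem_filter.mp (mem_product.mp (hES he)).1).2
  have hfree : ∀ e ∈ E, ∀ e' ∈ E, e ≠ e' → ∃ c, (c = e.1.1 ∨ c = e.1.2) ∧
      (c ≠ e'.1.1 ∧ c ≠ e'.1.2 ∨ e.2 * k + k ≤ e'.2 * k ∨ e'.2 * k + k ≤ e.2 * k) := by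
    rintro ⟨⟨i, j⟩, b⟩ he ⟨⟨i', j'⟩, b'⟩ he' hne
    by_cases hb : b = b'
    · subst hb
      obtain ⟨c, hc, hc'⟩ := exists_eq_or_eq_and_ne_and_ne (hrows _ he) (hrows _ he')
        (fun h => hne (by rw [h]))
      exact ⟨c, hc, .inl hc'⟩
    · exact ⟨i, .inl rfl, .inr (add_le_or_add_le_of_ne (Fin.val_ne_of_ne hb) k)⟩
  have h₁ : ∀ e ∈ E, prob (A e) = ((2 : ℝ) ^ k)⁻¹ := fun e he =>
    prob_kmer_eq (hrows e he).ne (mul_add_le_of_lt_div e.2.isLt)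
  have h₂ : ∀ q ∈ E.offDiag, prob (fun X => A q.1 X ∧ A q.2 X) = ((2 : ℝ) ^ k)⁻¹ ^ 2 := by
    rintro ⟨e, e'⟩ hq
    obtain ⟨he, he', hne⟩ := mem_offDiag.mp hq
    exact prob_kmer_eq_and_kmer_eq (hrows e he).ne (hrows e' he').ne
      (mul_add_le_of_lt_div e.2.isLt) (mul_add_le_of_lt_div e'.2.isLt)
      (hfree e he e' he' hne) (hfree e' he' e he hne.symm)
  have hhalf : (#E : ℝ) * ((2 : ℝ) ^ k)⁻¹ = 1 / 2 := by
    rw [hE, ← Nat.sub_add_cancel hk]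
    push_cast
    rw [pow_succ]
    field_simp
  calc (3 : ℝ) / 8 = 1 / 2 - (1 / 2) ^ 2 / 2 := by norm_num
    _ ≤ prob (fun X => ∃ e ∈ E, A e X) := hhalf ▸ le_prob_exists_of_pairwise_indep E A h₁ h₂
    _ ≤ prob (eventD m k) := prob_mono fun X ⟨e, he, hAe⟩ =>
      ⟨e.1.1, e.1.2, hrows e he, e.2 * k, mul_add_le_of_lt_div e.2.isLt, hAe⟩

end AlignedFamily

open Filter Real Asymptotics

lemma two_pow_ceil_sub_one_le {y : ℝ} (hy : 0 ≤ y) : (2 : ℝ) ^ (⌈y⌉₊ - 1) ≤ (2 : ℝ) ^ y := by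
  rw [← Real.rpow_natCast]
  gcongr
  · norm_num
  · have := Nat.ceil_lt_add_one hy
    rcases Nat.eq_zero_or_pos ⌈y⌉₊ with h | h
    · simp [h, hy]
    · rw [Nat.cast_sub h]; push_cast; linarith

lemma sq_div_four_le_choose_two {m : ℕ} (hm : 2 ≤ (m : ℝ)) : (m : ℝ) ^ 2 / 4 ≤ m.choose 2 := by
  rw [Nat.cast_choose_two]
  nlinarith

lemma div_two_mul_le_div {n k : ℕ} (hk : 0 < k) (hkn : k ≤ n) :
    (n : ℝ) / (2 * k) ≤ (n / k : ℕ) := by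
  have hq : 1 ≤ n / k := (Nat.one_le_div_iff hk).mpr hkn
  have hlt : (n : ℝ) < k * ((n / k : ℕ) + 1) := by
    exact_mod_cast (Nat.lt_mul_div_succ n hk)
  rw [div_le_iff₀ (by positivity)]
  have : (1 : ℝ) ≤ (n / k : ℕ) := by exact_mod_cast hq
  nlinarith

lemma isLittleO_logb_add_const_rpow (β C : ℝ) {δ : ℝ} (hδ : 0 < δ) :
    (fun x => β * logb 2 x + C) =o[atTop] fun x => x ^ δ := by
  have hlog := (isLittleO_log_rpow_atTop hδ).const_mul_left (β / log 2)
  have hC : (fun _ : ℝ => C) =o[atTop] fun x => x ^ δ :=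
    (isLittleO_one_left_iff ℝ).mpr (tendsto_norm_atTop_atTop.comp (tendsto_rpow_atTop hδ))
      |>.const_mul_left C |>.congr_left fun _ => mul_one C
  refine (hlog.add hC).congr_left fun x => ?_
  rw [logb]
  ring

lemma eventually_two_pow_le_choose_mul_div {α β : ℝ} (hα : 0 < α) (hβ : 0 < β)
    (h : β < 2 * α + 1) :
    ∀ᶠ n : ℕ in atTop, 1 ≤ ⌈β * logb 2 n⌉₊ ∧
      2 ^ (⌈β * logb 2 n⌉₊ - 1) ≤ ⌈(n : ℝ) ^ α⌉₊.choose 2 * (n / ⌈β * logb 2 n⌉₊) := by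
  have hε : 0 < 2 * α + 1 - β := by linarith
  have hreal : ∀ᶠ x : ℝ in atTop, 2 ≤ x ∧ 2 ≤ x ^ α ∧ β * logb 2 x + 1 ≤ x ∧
      8 * (β * logb 2 x + 1) ≤ x ^ (2 * α + 1 - β) := by
    filter_upwards [eventually_ge_atTop 2, (tendsto_rpow_atTop hα).eventually_ge_atTop 2,
      (isLittleO_logb_add_const_rpow β 1 one_pos).eventuallyLE,
      ((isLittleO_logb_add_const_rpow β 1 hε).const_mul_left 8).eventuallyLE]
      with x hx hxα hlin hε'
    rw [rpow_one] at hlin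
    have hx0 : 0 ≤ x := by linarith
    rw [norm_of_nonneg hx0] at hlin
    rw [norm_of_nonneg (rpow_nonneg hx0 _)] at hε'
    exact ⟨hx, hxα, (le_norm_self _).trans hlin, (le_norm_self _).trans hε'⟩
  filter_upwards [tendsto_natCast_atTop_atTop.eventually hreal] with n ⟨hn, hnα, hLn, hLε⟩
  set L := β * logb 2 n with hLdef
  set k := ⌈L⌉₊
  set m := ⌈(n : ℝ) ^ α⌉₊
  have hL : 0 < L := mul_pos hβ (logb_pos one_lt_two (by linarith))
  have hk : 0 < k := Nat.ceil_pos.mpr hL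
  have hK : (k : ℝ) < L + 1 := Nat.ceil_lt_add_one hL.le
  have hkn : k ≤ n := by exact_mod_cast (hK.trans_le hLn).le
  have hm : (n : ℝ) ^ α ≤ m := Nat.le_ceil _
  have hpow : (2 : ℝ) ^ (k - 1) ≤ (n : ℝ) ^ β := by
    refine (two_pow_ceil_sub_one_le hL.le).trans_eq ?_
    rw [hLdef, mul_comm, rpow_mul zero_le_two, rpow_logb zero_lt_two (by norm_num) (by linarith)]
  have hsplit : (n : ℝ) ^ β * (n : ℝ) ^ (2 * α + 1 - β) = ((n : ℝ) ^ α) ^ 2 * n := by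
    rw [← rpow_add (by linarith), ← rpow_natCast, ← rpow_mul (by linarith),
      ← rpow_add_one (by linarith)]
    ring_nf
  refine ⟨hk, ?_⟩
  suffices (2 : ℝ) ^ (k - 1) ≤ (m.choose 2 : ℝ) * (n / k : ℕ) by exact_mod_cast this
  calc (2 : ℝ) ^ (k - 1) ≤ (n : ℝ) ^ β := hpow
    _ ≤ ((n : ℝ) ^ α) ^ 2 * n / (8 * k) := by
        rw [le_div_iff₀ (by positivity), ← hsplit]
        gcongr
        linarith
    _ = ((n : ℝ) ^ α) ^ 2 / 4 * (n / (2 * k)) := by field_simp; ring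
    _ ≤ (m : ℝ) ^ 2 / 4 * (n / (2 * k)) := by gcongr
    _ ≤ (m.choose 2 : ℝ) * (n / k : ℕ) := by
        gcongr
        · exact sq_div_four_le_choose_two (hnα.trans hm)
        · exact div_two_mul_le_div hk hkn

/-- If `β < 2α + 1`, then with `m = ⌈n^α⌉` and `k = ⌈β log₂ n⌉`, the probability
that two of the `m` uniformly random strings share a `k`-mer at an aligned position
has `liminf` at least `1/4`. -/
theorem aligned_repeat_liminf
    (α β : ℝ) (hα : 0 < α) (hβ : 0 < β) (h : β < 2 * α + 1) :
    (1 : ℝ) / 4 ≤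
      Filter.liminf
        (fun n : ℕ =>
          prob (fun X : Fin ⌈(n : ℝ) ^ α⌉₊ → Fin n → Bool =>
            eventD ⌈(n : ℝ) ^ α⌉₊ ⌈β * Real.logb 2 (n : ℝ)⌉₊ X))
        Filter.atTop := by
  have hbound : ∀ᶠ n : ℕ in atTop, (1 : ℝ) / 4 ≤
      prob (fun X : Fin ⌈(n : ℝ) ^ α⌉₊ → Fin n → Bool =>
        eventD ⌈(n : ℝ) ^ α⌉₊ ⌈β * Real.logb 2 (n : ℝ)⌉₊ X) := by
    filter_upwards [eventually_two_pow_le_choose_mul_div hα hβ h] with n ⟨hk, hN⟩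
    exact le_trans (by norm_num) (three_eighths_le_prob_eventD hk hN)
  refine le_liminf_of_le ?_ hbound
  exact (isBoundedUnder_of_eventually_le (.of_forall fun n => prob_le_one _)).isCoboundedUnder_ge
end

section
/- Let α > 0 and β > 0 be real numbers with β > 2α + 2. For each integer n ≥ 2 set m = ⌈n^α⌉ and k = ⌈β·log₂ n⌉. Then the probability that there exist pairs (i,a) ≠ (j,b), with 1 ≤ i,j ≤ m and 1 ≤ a,b ≤ n−k+1, such that x_i(a) = x_j(b), tends to 0 as n → ∞. (Lemma 1: no repeated k-mers across or within the strings, with probability tending to 1.) -/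
/-- Some `k`-mer is repeated across or within the strings of the family:
there are pairs `(i,a) ≠ (j,b)` with `x_i(a) = x_j(b)`. -/
def hasRepeat {n : ℕ} (m k : ℕ) (X : Fin m → Fin n → Bool) : Prop :=
  ∃ i j : Fin m, ∃ a b : ℕ,
    a + k ≤ n ∧ b + k ≤ n ∧ (i, a) ≠ (j, b) ∧ kmer k (X i) a = kmer k (X j) b

lemma get_eq {n : ℕ} (x : Fin n → Bool) (s : ℕ) (h : s < n) : get x s = x ⟨s, h⟩ :=
  dif_pos h

lemma event_card_le_aux (m n k : ℕ) (i j : Fin m) (a b : ℕ)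
    (hak : a + k ≤ n) (hbk : b + k ≤ n) (hcase : i ≠ j ∨ a < b) :
    Nat.card {X : Fin m → Fin n → Bool // kmer k (X i) a = kmer k (X j) b}
      ≤ 2 ^ (m * n - k) := by
  classical
  set S : Finset (Fin m × Fin n) :=
    (Finset.range k).attach.image
      (fun t => (j, (⟨b + t.1, by have := Finset.mem_range.mp t.2; omega⟩ : Fin n))) with hS
  have hcardS : S.card = k := by
    have hinj : Function.Injective
        (fun t : {x // x ∈ Finset.range k} =>
          (j, (⟨b + t.1, by have := Finset.mem_range.mp t.2; omega⟩ : Fin n))) := by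
      intro t1 t2 hh
      simp only [Prod.mk.injEq, Fin.mk.injEq] at hh
      exact Subtype.ext (by omega)
    rw [hS, Finset.card_image_of_injective _ hinj, Finset.card_attach, Finset.card_range]
  have hmemS : ∀ (i' : Fin m) (q : Fin n),
      (i', q) ∈ S ↔ i' = j ∧ b ≤ (q : ℕ) ∧ (q : ℕ) < b + k := by
    intro i' q
    constructor
    · intro hmem
      simp only [hS, Finset.mem_image] at hmem
      obtain ⟨t, -, ht⟩ := hmem
      have htk := Finset.mem_range.mp t.2
      obtain ⟨h1, h2⟩ := Prod.mk.injEq .. ▸ ht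
      refine ⟨h1.symm, ?_, ?_⟩ <;>
        · have : (q : ℕ) = b + t.1 := by rw [← h2]
          omega
    · rintro ⟨rfl, h1, h2⟩
      simp only [hS, Finset.mem_image]
      refine ⟨⟨(q : ℕ) - b, Finset.mem_range.mpr (by omega)⟩, Finset.mem_attach _ _, ?_⟩
      refine Prod.ext rfl (Fin.ext ?_)
      simp only [Fin.val_mk]
      omega
  have key : Function.Injective
      (fun (X : {X : Fin m → Fin n → Bool // kmer k (X i) a = kmer k (X j) b})
        (p : {p : Fin m × Fin n // p ∉ S}) => X.1 p.1.1 p.1.2) := by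
    intro X Y hXY
    have hoff : ∀ (i' : Fin m) (q : Fin n), (i', q) ∉ S → X.1 i' q = Y.1 i' q := by
      intro i' q hq
      exact congrFun hXY ⟨(i', q), hq⟩
    have hevX : ∀ t, t < k → get (X.1 i) (a + t) = get (X.1 j) (b + t) :=
      fun t ht => congrFun X.2 ⟨t, ht⟩
    have hevY : ∀ t, t < k → get (Y.1 i) (a + t) = get (Y.1 j) (b + t) :=
      fun t ht => congrFun Y.2 ⟨t, ht⟩
    have main : ∀ q : ℕ, ∀ (i' : Fin m) (hq : q < n), X.1 i' ⟨q, hq⟩ = Y.1 i' ⟨q, hq⟩ := by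
      intro q
      induction q using Nat.strong_induction_on with
      | _ q IH =>
        intro i' hq
        by_cases hmem : (i', (⟨q, hq⟩ : Fin n)) ∈ S
        · obtain ⟨rfl, hbq0, hqk0⟩ := (hmemS i' ⟨q, hq⟩).mp hmem
          have hbq : b ≤ q := hbq0
          have hqk : q < b + k := hqk0
          have ht : q - b < k := by omega
          have han : a + (q - b) < n := by omega
          have hfin : (⟨q, hq⟩ : Fin n) = ⟨b + (q - b), by omega⟩ := by
            refine Fin.ext ?_
            show q = b + (q - b)
            omega
          have hXq : X.1 i' ⟨q, hq⟩ = X.1 i ⟨a + (q - b), han⟩ := by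
            have h1 := (hevX (q - b) ht).symm
            rw [get_eq _ _ (show b + (q - b) < n by omega), get_eq _ _ han] at h1
            rw [hfin, h1]
          have hYq : Y.1 i' ⟨q, hq⟩ = Y.1 i ⟨a + (q - b), han⟩ := by
            have h1 := (hevY (q - b) ht).symm
            rw [get_eq _ _ (show b + (q - b) < n by omega), get_eq _ _ han] at h1
            rw [hfin, h1]
          rw [hXq, hYq]
          rcases hcase with hij | hab
          · refine hoff i _ ?_
            intro hc
            exact hij ((hmemS i _).mp hc).1
          · exact IH (a + (q - b)) (by omega) i han
        · exact hoff i' _ hmem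
    refine Subtype.ext (funext fun i' => funext fun q => ?_)
    have := main (q : ℕ) i' q.2
    simpa using this
  calc Nat.card {X : Fin m → Fin n → Bool // kmer k (X i) a = kmer k (X j) b}
      = Fintype.card {X : Fin m → Fin n → Bool // kmer k (X i) a = kmer k (X j) b} :=
        Nat.card_eq_fintype_card
    _ ≤ Fintype.card ({p : Fin m × Fin n // p ∉ S} → Bool) :=
        Fintype.card_le_of_injective _ key
    _ = 2 ^ (m * n - k) := by
        rw [Fintype.card_fun, Fintype.card_bool]
        congr 1
        have : Fintype.card {p : Fin m × Fin n // p ∉ S} =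
            Fintype.card (Fin m × Fin n) - Fintype.card {p : Fin m × Fin n // p ∈ S} :=
          Fintype.card_subtype_compl _
        rw [this]
        simp [hcardS]

lemma event_card_le (m n k : ℕ) (i j : Fin m) (a b : ℕ)
    (hak : a + k ≤ n) (hbk : b + k ≤ n) (hne : (i, a) ≠ (j, b)) :
    Nat.card {X : Fin m → Fin n → Bool // kmer k (X i) a = kmer k (X j) b}
      ≤ 2 ^ (m * n - k) := by
  by_cases hc : i ≠ j ∨ a < b
  · exact event_card_le_aux m n k i j a b hak hbk hc
  · push_neg at hc
    obtain ⟨hij, hba⟩ := hc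
    have hab : b < a := by
      rcases lt_or_eq_of_le hba with h | h
      · exact h
      · exact absurd (by rw [hij, h]) hne
    have : Nat.card {X : Fin m → Fin n → Bool // kmer k (X i) a = kmer k (X j) b}
        = Nat.card {X : Fin m → Fin n → Bool // kmer k (X j) b = kmer k (X i) a} :=
      Nat.card_congr (Equiv.subtypeEquivRight (fun X => ⟨Eq.symm, Eq.symm⟩))
    rw [this]
    exact event_card_le_aux m n k j i b a hbk hak (Or.inr hab)

lemma hasRepeat_card_le (m n k : ℕ) (hk : 1 ≤ k) :
    Nat.card {X : Fin m → Fin n → Bool // hasRepeat m k X}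
      ≤ m * m * n * n * 2 ^ (m * n - k) := by
  classical
  rw [Nat.card_eq_fintype_card, Fintype.card_subtype]
  have hsub : (Finset.univ.filter (fun X : Fin m → Fin n → Bool => hasRepeat m k X)) ⊆
      (Finset.univ : Finset (Fin m × Fin m × Fin n × Fin n)).biUnion
        (fun q => Finset.univ.filter
          (fun X : Fin m → Fin n → Bool =>
            (q.2.2.1 : ℕ) + k ≤ n ∧ (q.2.2.2 : ℕ) + k ≤ n ∧
            (q.1, (q.2.2.1 : ℕ)) ≠ (q.2.1, (q.2.2.2 : ℕ)) ∧
            kmer k (X q.1) q.2.2.1 = kmer k (X q.2.1) q.2.2.2)) := by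
    intro X hX
    simp only [Finset.mem_filter, Finset.mem_univ, true_and] at hX
    obtain ⟨i, j, a, b, hak, hbk, hne, hev⟩ := hX
    have ha : a < n := by omega
    have hb : b < n := by omega
    simp only [Finset.mem_biUnion, Finset.mem_filter, Finset.mem_univ, true_and]
    exact ⟨(i, j, ⟨a, ha⟩, ⟨b, hb⟩), hak, hbk, hne, hev⟩
  refine le_trans (Finset.card_le_card hsub) ?_
  refine le_trans (Finset.card_biUnion_le) ?_
  refine le_trans (Finset.sum_le_card_nsmul _ _ (2 ^ (m * n - k)) ?_) ?_
  · rintro ⟨i, j, a, b⟩ -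
    by_cases hc : (a : ℕ) + k ≤ n ∧ (b : ℕ) + k ≤ n ∧ (i, (a : ℕ)) ≠ (j, (b : ℕ))
    · obtain ⟨hak, hbk, hne⟩ := hc
      refine le_trans (Finset.card_le_card (show _ ⊆ Finset.univ.filter
          (fun X : Fin m → Fin n → Bool =>
            kmer k (X i) (a : ℕ) = kmer k (X j) (b : ℕ)) from ?_)) ?_
      · intro X hX
        exact Finset.mem_filter.mpr ⟨Finset.mem_univ X,
          (Finset.mem_filter.mp hX).2.2.2.2⟩
      · rw [← Fintype.card_subtype, ← Nat.card_eq_fintype_card]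
        exact event_card_le m n k i j (a : ℕ) (b : ℕ) hak hbk hne
    · refine le_trans (le_of_eq (Finset.card_eq_zero.mpr ?_)) (Nat.zero_le _)
      rw [Finset.filter_eq_empty_iff]
      intro X _
      exact fun hX => hc ⟨hX.1, hX.2.1, hX.2.2.1⟩
  · rw [Finset.card_univ]
    simp only [Fintype.card_prod, Fintype.card_fin, smul_eq_mul]
    exact le_of_eq (by ring)

lemma prob_hasRepeat_le (m n k : ℕ) (hm : 1 ≤ m) (hk : 1 ≤ k) (hkn : k ≤ n) :
    prob (fun X : Fin m → Fin n → Bool => hasRepeat m k X)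
      ≤ ((m : ℝ) * m * n * n) / 2 ^ k := by
  have hkmn : k ≤ m * n := le_trans hkn (Nat.le_mul_of_pos_left n hm)
  have hΩ : (Fintype.card (Fin m → Fin n → Bool)) = 2 ^ (m * n) := by
    simp [Fintype.card_fun, ← pow_mul, Nat.mul_comm]
  rw [prob, hΩ]
  have hnum : (Nat.card {X : Fin m → Fin n → Bool // hasRepeat m k X} : ℝ)
      ≤ (m : ℝ) * m * n * n * 2 ^ (m * n - k) := by
    have := hasRepeat_card_le m n k hk
    calc (Nat.card {X : Fin m → Fin n → Bool // hasRepeat m k X} : ℝ)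
        ≤ ((m * m * n * n * 2 ^ (m * n - k) : ℕ) : ℝ) := by exact_mod_cast this
      _ = (m : ℝ) * m * n * n * 2 ^ (m * n - k) := by push_cast; ring
  have hpow : ((2 : ℝ) ^ (m * n) : ℝ) = 2 ^ (m * n - k) * 2 ^ k := by
    rw [← pow_add, Nat.sub_add_cancel hkmn]
  have h2 : (0 : ℝ) < 2 ^ (m * n) := by positivity
  rw [div_le_div_iff₀ (by exact_mod_cast h2) (by positivity)]
  push_cast
  calc (Nat.card {X : Fin m → Fin n → Bool // hasRepeat m k X} : ℝ) * 2 ^ k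
      ≤ ((m : ℝ) * m * n * n * 2 ^ (m * n - k)) * 2 ^ k := by
        apply mul_le_mul_of_nonneg_right hnum (by positivity)
    _ = (m : ℝ) * m * n * n * 2 ^ (m * n) := by rw [hpow]; ring

/-- Lemma 1: if `β > 2α + 2`, then with `m = ⌈n^α⌉` and `k = ⌈β log₂ n⌉`, the
probability that some `k`-mer is repeated across or within the `m` uniformly
random strings tends to `0` as `n → ∞`. -/
theorem no_repeats_region
    (α β : ℝ) (hα : 0 < α) (hβ : 0 < β) (h : β > 2 * α + 2) :
    Filter.Tendsto
      (fun n : ℕ =>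
        prob (fun X : Fin ⌈(n : ℝ) ^ α⌉₊ → Fin n → Bool =>
          hasRepeat ⌈(n : ℝ) ^ α⌉₊ ⌈β * Real.logb 2 (n : ℝ)⌉₊ X))
      Filter.atTop (nhds 0) := by
  have hlo : (fun x : ℝ => β * Real.logb 2 x) =o[Filter.atTop] (fun x : ℝ => x) := by
    have h2 := Real.isLittleO_log_id_atTop.const_mul_left (β / Real.log 2)
    refine h2.congr' (Filter.Eventually.of_forall fun x => ?_) (Filter.Eventually.of_forall fun x => rfl)
    simp only [Real.logb]
    ring
  have hlog' : ∀ᶠ x : ℝ in Filter.atTop, ‖β * Real.logb 2 x‖ ≤ 1 * ‖x‖ :=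
    hlo.def one_pos
  have hlog : ∀ᶠ n : ℕ in Filter.atTop, β * Real.logb 2 (n : ℝ) ≤ (n : ℝ) := by
    filter_upwards [tendsto_natCast_atTop_atTop.eventually hlog'] with n hn
    rw [Real.norm_eq_abs, Real.norm_eq_abs] at hn
    calc β * Real.logb 2 (n : ℝ) ≤ |β * Real.logb 2 (n : ℝ)| := le_abs_self _
      _ ≤ 1 * |(n : ℝ)| := hn
      _ = (n : ℝ) := by rw [one_mul, abs_of_nonneg (by positivity)]
  have hev : ∀ᶠ n : ℕ in Filter.atTop,
      prob (fun X : Fin ⌈(n : ℝ) ^ α⌉₊ → Fin n → Bool =>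
          hasRepeat ⌈(n : ℝ) ^ α⌉₊ ⌈β * Real.logb 2 (n : ℝ)⌉₊ X)
        ≤ 4 * (n : ℝ) ^ (2 * α + 2 - β) := by
    filter_upwards [hlog, Filter.eventually_ge_atTop 2] with n hlogn hn2
    set m := ⌈(n : ℝ) ^ α⌉₊ with hmdef
    set k := ⌈β * Real.logb 2 (n : ℝ)⌉₊ with hkdef
    have hn0 : (0 : ℝ) < (n : ℝ) := by
      have : (0 : ℕ) < n := by omega
      exact_mod_cast this
    have hn1 : (1 : ℝ) < (n : ℝ) := by
      have : (1 : ℕ) < n := by omega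
      exact_mod_cast this
    have hrpos : (0 : ℝ) < (n : ℝ) ^ α := Real.rpow_pos_of_pos hn0 α
    have hm1 : 1 ≤ m := Nat.one_le_ceil_iff.mpr hrpos
    have hk1 : 1 ≤ k := Nat.one_le_ceil_iff.mpr
      (mul_pos hβ (Real.logb_pos (by norm_num) hn1))
    have hkn : k ≤ n := Nat.ceil_le.mpr (by exact_mod_cast hlogn)
    refine le_trans (prob_hasRepeat_le m n k hm1 hk1 hkn) ?_
    have hralpha : (1 : ℝ) ≤ (n : ℝ) ^ α := Real.one_le_rpow hn1.le hα.le
    have hmle : (m : ℝ) ≤ 2 * (n : ℝ) ^ α := by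
      have := Nat.ceil_lt_add_one hrpos.le
      calc (m : ℝ) ≤ (n : ℝ) ^ α + 1 := this.le
        _ ≤ (n : ℝ) ^ α + (n : ℝ) ^ α := by linarith
        _ = 2 * (n : ℝ) ^ α := by ring
    have hkpow : (n : ℝ) ^ β ≤ 2 ^ k := by
      have h1 : ((2 : ℝ) ^ k : ℝ) = (2 : ℝ) ^ ((k : ℕ) : ℝ) := by
        rw [Real.rpow_natCast]
      rw [h1]
      calc (n : ℝ) ^ β = ((2 : ℝ) ^ Real.logb 2 (n : ℝ)) ^ β := by
            rw [Real.rpow_logb (by norm_num) (by norm_num) hn0]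
        _ = (2 : ℝ) ^ (Real.logb 2 (n : ℝ) * β) := by
            rw [← Real.rpow_mul (by norm_num : (0:ℝ) ≤ 2)]
        _ ≤ (2 : ℝ) ^ ((k : ℕ) : ℝ) := by
            apply Real.rpow_le_rpow_of_exponent_le one_le_two
            calc Real.logb 2 (n : ℝ) * β = β * Real.logb 2 (n : ℝ) := by ring
              _ ≤ ((k : ℕ) : ℝ) := Nat.le_ceil _
    have hkpos : (0 : ℝ) < 2 ^ k := by positivity
    have hbpos : (0 : ℝ) < (n : ℝ) ^ β := Real.rpow_pos_of_pos hn0 β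
    have hnum : ((m : ℝ) * m * n * n) ≤ 4 * (n : ℝ) ^ (2 * α + 2) := by
      have hexp : (n : ℝ) ^ (2 * α + 2) = (n : ℝ) ^ α * (n : ℝ) ^ α * (n : ℝ) * (n : ℝ) := by
        rw [show 2 * α + 2 = α + (α + (1 + 1)) by ring, Real.rpow_add hn0,
          Real.rpow_add hn0, Real.rpow_add hn0, Real.rpow_one]
        ring
      rw [hexp]
      have hm0 : (0 : ℝ) ≤ (m : ℝ) := Nat.cast_nonneg m
      nlinarith [mul_le_mul hmle hmle hm0 (by positivity : (0:ℝ) ≤ 2 * (n:ℝ)^α),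
        mul_pos hn0 hn0]
    calc ((m : ℝ) * m * n * n) / 2 ^ k ≤ (4 * (n : ℝ) ^ (2 * α + 2)) / (n : ℝ) ^ β :=
          div_le_div₀ (by positivity) hnum hbpos hkpow
      _ = 4 * (n : ℝ) ^ (2 * α + 2 - β) := by
          rw [Real.rpow_sub hn0]
          ring
  have hg : Filter.Tendsto (fun n : ℕ => 4 * (n : ℝ) ^ (2 * α + 2 - β))
      Filter.atTop (nhds 0) := by
    have h1 : Filter.Tendsto (fun x : ℝ => x ^ (2 * α + 2 - β)) Filter.atTop (nhds 0) := by
      have := tendsto_rpow_neg_atTop (show (0 : ℝ) < β - (2 * α + 2) by linarith)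
      simpa [show -(β - (2 * α + 2)) = 2 * α + 2 - β by ring] using this
    have h2 := (h1.comp tendsto_natCast_atTop_atTop).const_mul (4 : ℝ)
    simpa using h2
  refine squeeze_zero' (Filter.Eventually.of_forall fun n => ?_) hev hg
  exact div_nonneg (Nat.cast_nonneg _) (Nat.cast_nonneg _)
end

section
/- Fix integers n, k with 1 ≤ k < n. Let x be a uniformly random binary string of length n (i.i.d. Bernoulli(1/2) symbols). For any positions a, b with 1 ≤ a < b ≤ n − k + 1, Pr( x(a) = x(b) ) = 2^{−k}. In particular this exact value holds even when the two k-mers overlap, i.e., when b − a < k. -/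
/-- Repeatedly subtract `b - a` while inside the window `[b, b+k)`. -/
def red (a b k : ℕ) (p : ℕ) : ℕ :=
  if h : b ≤ p ∧ p < b + k ∧ a < b then red a b k (p - (b - a)) else p
termination_by p
decreasing_by omega

lemma red_le (a b k p : ℕ) : red a b k p ≤ p := by
  induction p using Nat.strong_induction_on with
  | _ p ih =>
    rw [red]
    split
    · rename_i h
      exact le_trans (ih _ (by omega)) (by omega)
    · exact le_refl _

lemma red_not_in (a b k : ℕ) (hab : a < b) (p : ℕ) :
    ¬ (b ≤ red a b k p ∧ red a b k p < b + k) := by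
  induction p using Nat.strong_induction_on with
  | _ p ih =>
    rw [red]
    split
    · rename_i h
      exact ih _ (by omega)
    · rename_i h
      omega

lemma red_in (a b k p : ℕ) (hab : a < b) (h1 : b ≤ p) (h2 : p < b + k) :
    red a b k p = red a b k (p - (b - a)) := by
  rw [red, dif_pos ⟨h1, h2, hab⟩]

lemma red_out (a b k p : ℕ) (h : ¬ (b ≤ p ∧ p < b + k)) : red a b k p = p := by
  rw [red, dif_neg (by omega)]

lemma get_red {n : ℕ} (a b k : ℕ) (hab : a < b) (x : Fin n → Bool)
    (hx : kmer k x a = kmer k x b) (p : ℕ) :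
    get x (red a b k p) = get x p := by
  induction p using Nat.strong_induction_on with
  | _ p ih =>
    by_cases h : b ≤ p ∧ p < b + k
    · have ht : p - b < k := by omega
      have hcong := congrFun hx ⟨p - b, ht⟩
      simp only [kmer] at hcong
      have h1 : b + (p - b) = p := by omega
      have h2 : a + (p - b) = p - (b - a) := by omega
      rw [red_in a b k p hab h.1 h.2]
      rw [ih _ (by omega)]
      rw [h1, h2] at hcong
      exact hcong
    · rw [red_out a b k p h]

/-- For a uniformly random binary string `x` of length `n` and any two (0-indexed)
positions `a < b` with `b + k ≤ n`, the probability that the `k`-mers `x(a)` and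
`x(b)` coincide is exactly `2^{-k}` — even when the two `k`-mers overlap. -/
theorem kmer_match_prob_exact
    (n k : ℕ) (hk : 1 ≤ k) (hkn : k < n)
    (a b : ℕ) (hab : a < b) (hb : b + k ≤ n) :
    prob (fun x : Fin n → Bool => kmer k x a = kmer k x b) = 1 / 2 ^ k := by
  classical
  -- the equivalence
  have E : {x : Fin n → Bool // kmer k x a = kmer k x b} ≃
      ({p : Fin n // ¬ (b ≤ p.val ∧ p.val < b + k)} → Bool) :=
    { toFun := fun x q => x.1 q.1
      invFun := fun y =>
        ⟨fun p => y ⟨⟨red a b k p.val, lt_of_le_of_lt (red_le a b k p.val) p.isLt⟩,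
            red_not_in a b k hab p.val⟩, by
          funext t
          simp only [kmer]
          have h1 : a + t.val < n := by omega
          have h2 : b + t.val < n := by omega
          have hr : red a b k (b + t.val) = red a b k (a + t.val) := by
            rw [red_in a b k (b + t.val) hab (by omega) (by omega)]
            congr 1
            omega
          simp only [_root_.get, dif_pos h1, dif_pos h2]
          congr 2
          exact Fin.ext hr.symm⟩
      left_inv := fun x => by
        apply Subtype.ext
        funext p
        have h := get_red a b k hab x.1 x.2 p.val
        have hr : red a b k p.val < n := lt_of_le_of_lt (red_le a b k p.val) p.isLt
        simp only [_root_.get, dif_pos hr, dif_pos p.isLt] at h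
        simpa using h
      right_inv := fun y => by
        funext q
        have hq : red a b k q.1.val = q.1.val := red_out a b k q.1.val q.2
        show y ⟨⟨red a b k q.1.val, lt_of_le_of_lt (red_le a b k q.1.val) q.1.isLt⟩,
            red_not_in a b k hab q.1.val⟩ = y q
        congr 1
        apply Subtype.ext
        apply Fin.ext
        exact hq }
  have hcardT : Fintype.card {p : Fin n // ¬ (b ≤ p.val ∧ p.val < b + k)} = n - k := by
    have e2 : Fin k ≃ {p : Fin n // b ≤ p.val ∧ p.val < b + k} :=
      { toFun := fun t => ⟨⟨b + t.val, by omega⟩, by constructor <;> simp <;> omega⟩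
        invFun := fun q => ⟨q.1.val - b, by have := q.2; omega⟩
        left_inv := fun t => by ext; simp
        right_inv := fun q => by
          apply Subtype.ext
          apply Fin.ext
          have := q.2
          simp
          omega }
    have h2 : Fintype.card {p : Fin n // b ≤ p.val ∧ p.val < b + k} = k := by
      rw [← Fintype.card_congr e2, Fintype.card_fin]
    rw [Fintype.card_subtype_compl, h2, Fintype.card_fin]
  have hcard : Nat.card {x : Fin n → Bool // kmer k x a = kmer k x b} = 2 ^ (n - k) := by
    rw [Nat.card_congr E, Nat.card_eq_fintype_card, Fintype.card_fun, hcardT,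
      Fintype.card_bool]
  rw [prob, hcard]
  have hΩ : (Fintype.card (Fin n → Bool) : ℝ) = 2 ^ n := by
    rw [Fintype.card_fun, Fintype.card_fin, Fintype.card_bool]
    push_cast
    ring
  rw [hΩ]
  have hpow : (2 : ℝ) ^ n = 2 ^ (n - k) * 2 ^ k := by
    rw [← pow_add]
    congr 1
    omega
  rw [hpow]
  push_cast
  field_simp
end

section
/- Fix integers n, m, k with 1 ≤ k < n and m ≥ 1. The probability of event A — that there exist an index i and positions a ≠ b with x_i(a) = x_i(b) — is at most m·n²·2^{−k}. -/
/-- Event A: some string of the family contains a repeated `k`-mer. -/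
def eventA {n : ℕ} (m k : ℕ) (X : Fin m → Fin n → Bool) : Prop :=
  ∃ i : Fin m, ∃ a b : ℕ,
    a ≠ b ∧ a + k ≤ n ∧ b + k ≤ n ∧ kmer k (X i) a = kmer k (X i) b

lemma agree_of_kmer_eq {n k : ℕ} {a b : ℕ} (hab : a < b) (hbk : b + k ≤ n)
    {x y : Fin n → Bool}
    (hx : kmer k x a = kmer k x b) (hy : kmer k y a = kmer k y b)
    (h : ∀ p : Fin n, ¬ (b ≤ p.val ∧ p.val < b + k) → x p = y p) :
    x = y := by
  have H : ∀ v : ℕ, ∀ hv : v < n, x ⟨v, hv⟩ = y ⟨v, hv⟩ := by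
    intro v
    induction v using Nat.strong_induction_on with
    | _ v IH =>
      intro hv
      by_cases hw : b ≤ v ∧ v < b + k
      · obtain ⟨h1, h2⟩ := hw
        set t := v - b with ht
        have htk : t < k := by omega
        have hveq : v = b + t := by omega
        have han : a + t < n := by omega
        have hxe : x ⟨a + t, han⟩ = x ⟨v, hv⟩ := by
          have := congrFun hx ⟨t, htk⟩
          simp only [kmer, _root_.get, dif_pos han,
            dif_pos (show b + t < n by omega)] at this
          rw [this]
          congr 1
          exact Fin.ext (by simp [hveq])
        have hye : y ⟨a + t, han⟩ = y ⟨v, hv⟩ := by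
          have := congrFun hy ⟨t, htk⟩
          simp only [kmer, _root_.get, dif_pos han,
            dif_pos (show b + t < n by omega)] at this
          rw [this]
          congr 1
          exact Fin.ext (by simp [hveq])
        rw [← hxe, ← hye]
        exact IH (a + t) (by omega) han
      · exact h ⟨v, hv⟩ hw
  funext p
  have := H p.val p.isLt
  simpa using this

open Finset in
lemma card_E_le {n m k : ℕ} (hk : 1 ≤ k) (i : Fin m) {a b : ℕ}
    (hab : a < b) (hbk : b + k ≤ n) :
    (Finset.univ.filter
        (fun X : Fin m → Fin n → Bool => kmer k (X i) a = kmer k (X i) b)).card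
      ≤ 2 ^ (m * n - k) := by
  classical
  set E := Finset.univ.filter
      (fun X : Fin m → Fin n → Bool => kmer k (X i) a = kmer k (X i) b) with hE
  set P : Fin m × Fin n → Prop := fun p => p.1 = i ∧ b ≤ p.2.val ∧ p.2.val < b + k
    with hP
  -- injection from E to functions on the complement
  have hinj : Function.Injective
      (fun (X : ↥E) (q : {p : Fin m × Fin n // ¬ P p}) => X.1 q.1.1 q.1.2) := by
    intro X Y hXY
    have hmemX := X.2; have hmemY := Y.2
    simp only [hE, Finset.mem_filter] at hmemX hmemY
    apply Subtype.ext
    funext j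
    by_cases hj : j = i
    · subst hj
      apply agree_of_kmer_eq hab hbk hmemX.2 hmemY.2
      intro p hp
      exact congrFun hXY ⟨(j, p), fun hc => hp hc.2⟩
    · funext p
      exact congrFun hXY ⟨(j, p), fun hc => hj hc.1⟩
  have h1 : E.card ≤ Fintype.card ({p : Fin m × Fin n // ¬ P p} → Bool) := by
    rw [← Fintype.card_coe E]
    exact Fintype.card_le_of_injective _ hinj
  have h2 : Fintype.card {p : Fin m × Fin n // ¬ P p} ≤ m * n - k := by
    have hcompl : Fintype.card {p : Fin m × Fin n // ¬ P p}
        = Fintype.card (Fin m × Fin n) - Fintype.card {p : Fin m × Fin n // P p} :=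
      Fintype.card_subtype_compl P
    have hge : k ≤ Fintype.card {p : Fin m × Fin n // P p} := by
      have : Function.Injective (fun t : Fin k =>
          (⟨(i, ⟨b + t.val, by omega⟩), ⟨rfl, by show b ≤ b + t.val; omega, by show b + t.val < b + k; omega⟩⟩ :
            {p : Fin m × Fin n // P p})) := by
        intro t1 t2 h
        have := congrArg (fun q => q.1.2.val) h
        simp at this
        exact Fin.ext this
      simpa using Fintype.card_le_of_injective _ this
    have hcard : Fintype.card (Fin m × Fin n) = m * n := by simp
    omega
  calc E.card ≤ Fintype.card ({p : Fin m × Fin n // ¬ P p} → Bool) := h1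
    _ = 2 ^ Fintype.card {p : Fin m × Fin n // ¬ P p} := by
        simp [Fintype.card_fun]
    _ ≤ 2 ^ (m * n - k) := Nat.pow_le_pow_right (by norm_num) h2


/-- The probability of event A (an intra-sequence repeated `k`-mer) is at most
`m · n² · 2^{-k}`. -/
theorem eventA_prob_bound
    (n m k : ℕ) (hk : 1 ≤ k) (hkn : k < n) (hm : 1 ≤ m) :
    prob (fun X : Fin m → Fin n → Bool => eventA m k X) ≤
      (m : ℝ) * (n : ℝ) ^ 2 / 2 ^ k := by
  classical
  have hcardΩ : Fintype.card (Fin m → Fin n → Bool) = 2 ^ (m * n) := by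
    rw [Fintype.card_fun, Fintype.card_fun]
    simp [← pow_mul, Nat.mul_comm]
  set S : Finset (Fin m × ℕ × ℕ) :=
    (Finset.univ ×ˢ Finset.range n ×ˢ Finset.range n).filter
      (fun t => t.2.1 < t.2.2 ∧ t.2.2 + k ≤ n) with hS
  set E : Fin m × ℕ × ℕ → Finset (Fin m → Fin n → Bool) := fun t =>
    Finset.univ.filter
      (fun X => kmer k (X t.1) t.2.1 = kmer k (X t.1) t.2.2) with hEdef
  have hsub : Finset.univ.filter (fun X : Fin m → Fin n → Bool => eventA m k X)
      ⊆ S.biUnion E := by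
    intro X hX
    rw [Finset.mem_filter] at hX
    obtain ⟨i, a, b, hne, hak, hbk, heq⟩ := hX.2
    rw [Finset.mem_biUnion]
    rcases lt_or_gt_of_ne hne with hlt | hgt
    · refine ⟨(i, a, b), ?_, ?_⟩
      · simp only [hS, Finset.mem_filter, Finset.mem_product, Finset.mem_univ,
          Finset.mem_range]
        exact ⟨⟨trivial, by omega, by omega⟩, hlt, hbk⟩
      · simp only [hEdef, Finset.mem_filter, Finset.mem_univ]
        exact ⟨trivial, heq⟩
    · refine ⟨(i, b, a), ?_, ?_⟩
      · simp only [hS, Finset.mem_filter, Finset.mem_product, Finset.mem_univ,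
          Finset.mem_range]
        exact ⟨⟨trivial, by omega, by omega⟩, hgt, hak⟩
      · simp only [hEdef, Finset.mem_filter, Finset.mem_univ]
        exact ⟨trivial, heq.symm⟩
  have hScard : S.card ≤ m * (n * n) := by
    calc S.card ≤ ((Finset.univ : Finset (Fin m)) ×ˢ
          Finset.range n ×ˢ Finset.range n).card := Finset.card_filter_le _ _
      _ = m * (n * n) := by simp [Finset.card_product]
  have hC : (Finset.univ.filter
      (fun X : Fin m → Fin n → Bool => eventA m k X)).card
      ≤ m * (n * n) * 2 ^ (m * n - k) := by
    calc (Finset.univ.filter (fun X : Fin m → Fin n → Bool => eventA m k X)).card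
        ≤ (S.biUnion E).card := Finset.card_le_card hsub
      _ ≤ ∑ t ∈ S, (E t).card := Finset.card_biUnion_le
      _ ≤ ∑ _t ∈ S, 2 ^ (m * n - k) := by
          apply Finset.sum_le_sum
          intro t htS
          simp only [hS, Finset.mem_filter] at htS
          exact card_E_le hk t.1 htS.2.1 htS.2.2
      _ = S.card * 2 ^ (m * n - k) := by rw [Finset.sum_const, smul_eq_mul]
      _ ≤ m * (n * n) * 2 ^ (m * n - k) :=
          Nat.mul_le_mul_right _ hScard
  have hkmn : k ≤ m * n := by
    have : n ≤ m * n := Nat.le_mul_of_pos_left n hm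
    omega
  have hNat : (Finset.univ.filter
      (fun X : Fin m → Fin n → Bool => eventA m k X)).card * 2 ^ k
      ≤ m * (n * n) * 2 ^ (m * n) := by
    calc (Finset.univ.filter
        (fun X : Fin m → Fin n → Bool => eventA m k X)).card * 2 ^ k
        ≤ m * (n * n) * 2 ^ (m * n - k) * 2 ^ k := Nat.mul_le_mul_right _ hC
      _ = m * (n * n) * 2 ^ (m * n) := by
          rw [mul_assoc, ← pow_add, Nat.sub_add_cancel hkmn]
  have hnum : Nat.card {X : Fin m → Fin n → Bool // eventA m k X}
      = (Finset.univ.filter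
          (fun X : Fin m → Fin n → Bool => eventA m k X)).card := by
    rw [Nat.card_eq_fintype_card, Fintype.card_subtype]
  rw [prob, hnum, hcardΩ]
  rw [div_le_div_iff₀ (by positivity) (by positivity)]
  calc ((Finset.univ.filter
      (fun X : Fin m → Fin n → Bool => eventA m k X)).card : ℝ) * 2 ^ k
      ≤ (m : ℝ) * ((n : ℝ) * n) * 2 ^ (m * n) := by exact_mod_cast hNat
    _ = (m : ℝ) * (n : ℝ) ^ 2 * ((2 : ℝ) ^ (m * n) : ℝ) := by ring
    _ = (m : ℝ) * (n : ℝ) ^ 2 * ((2 ^ (m * n) : ℕ) : ℝ) := by push_cast; ring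
end

section
/- Fix integers n, k with 1 ≤ k < n. Let x and y be two independent uniformly random binary strings of length n (all symbols i.i.d. Bernoulli(1/2)). For any positions a, b, c, d in {1,…,n−k+1} with a < b and d − c ≠ b − a, Pr( x(a) = y(c) and x(b) = y(d) ) ≤ 2^{−2k}. (Lemma 4 of the paper: the bound holds even when x(a) overlaps x(b) and y(c) overlaps y(d).) -/
/-!
Assume `a + d < b + c` (otherwise exchange the roles of the pairs `(a, c)` and `(b, d)`), and
call an offset `t < k` *linked* if position `d + t` of `y` also lies in the window `y(c)`.
On the event, `x[b + t] = y[d + t] = x[a + (d + t - c)]` for every linked `t`, and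
`a + (d + t - c) < b + t`, so `x` is determined by its symbols off the `#linked` linked
positions `b + t`. Then `y` is determined by `x` on the union of its two windows, which has
`2k - #linked` positions. Hence at most `2 ^ (2n - 2k)` pairs `(x, y)` lie in the event.
-/

open Finset

theorem card_le_pow_of_eq_of_eqOn_compl {ι κ β : Type*} [Fintype ι] [Fintype κ] [Fintype β]
    [DecidableEq ι] [DecidableEq κ] {s : Finset ((ι → β) × (κ → β))} (D : Finset ι)
    (E : Finset κ)
    (h : ∀ ω ∈ s, ∀ ω' ∈ s, (∀ i ∉ D, ω.1 i = ω'.1 i) → (∀ j ∉ E, ω.2 j = ω'.2 j) → ω = ω') :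
    #s ≤ Fintype.card β ^ (Fintype.card ι - #D + (Fintype.card κ - #E)) := by
  calc #s ≤ #(univ : Finset ((↥Dᶜ → β) × (↥Eᶜ → β))) := by
        refine card_le_card_of_injOn (fun ω => (fun i => ω.1 i, fun j => ω.2 j))
          (fun _ _ => mem_coe.2 (mem_univ _)) fun ω hω ω' hω' hωω' => h ω hω ω' hω' ?_ ?_
        · exact fun i hi => congrFun (congrArg Prod.fst hωω') ⟨i, mem_compl.2 hi⟩
        · exact fun j hj => congrFun (congrArg Prod.snd hωω') ⟨j, mem_compl.2 hj⟩
    _ = _ := by simp [pow_add]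

theorem eq_of_eqOn_compl_of_exists_lt {α β : Type*} [LT α] [WellFoundedLT α] {f g : α → β}
    {T : Set α} (hT : ∀ i ∈ T, ∃ j < i, f i = f j ∧ g i = g j) (hoff : ∀ i ∉ T, f i = g i) :
    f = g :=
  funext fun i => WellFoundedLT.induction (motive := fun i => f i = g i) i fun i ih => by
    by_cases hi : i ∈ T
    · obtain ⟨j, hji, hf, hg⟩ := hT i hi
      rw [hf, hg, ih j hji]
    · exact hoff i hi

lemma eq_of_get_eq {n : ℕ} {x x' : Fin n → Bool} (h : ∀ m, get x m = get x' m) : x = x' :=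
  funext fun i => by simpa [_root_.get] using h i

lemma get_eq_get_of_eqOn_compl_attachFin {n : ℕ} {x x' : Fin n → Bool} {T : Finset ℕ}
    (hT : ∀ m ∈ T, m < n) (h : ∀ i ∉ T.attachFin hT, x i = x' i) (m : ℕ) (hm : m ∉ T) :
    get x m = get x' m := by
  unfold _root_.get
  split_ifs with hmn
  · exact h _ (by simpa using hm)
  · rfl

lemma kmer_eq_kmer_iff {n k : ℕ} {x y : Fin n → Bool} {a c : ℕ} :
    kmer k x a = kmer k y c ↔ ∀ t < k, get x (a + t) = get y (c + t) :=
  ⟨fun h t ht => congrFun h ⟨t, ht⟩, fun h => funext fun t => h t t.2⟩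

abbrev DoubleMatch {n : ℕ} (k a b c d : ℕ) (x y : Fin n → Bool) : Prop :=
  kmer k x a = kmer k y c ∧ kmer k x b = kmer k y d

def linkedOffsets (k c d : ℕ) : Finset ℕ :=
  (range k).filter fun t => d + t ∈ Ico c (c + k)

def linkedPositions (k b c d : ℕ) : Finset ℕ :=
  (linkedOffsets k c d).image (b + ·)

def coveredPositions (k c d : ℕ) : Finset ℕ :=
  (range k).image (c + ·) ∪ (range k \ linkedOffsets k c d).image (d + ·)

lemma card_linkedPositions_add_card_coveredPositions (k b c d : ℕ) :
    #(linkedPositions k b c d) + #(coveredPositions k c d) = 2 * k := by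
  have hdisj :
      Disjoint ((range k).image (c + ·)) ((range k \ linkedOffsets k c d).image (d + ·)) := by
    simp only [disjoint_left, mem_image, mem_range, mem_sdiff, linkedOffsets, mem_filter, mem_Ico]
    omega
  have hsub : linkedOffsets k c d ⊆ range k := filter_subset _ _
  rw [linkedPositions, coveredPositions, card_union_of_disjoint hdisj,
    card_image_of_injective _ (add_right_injective b),
    card_image_of_injective _ (add_right_injective c),
    card_image_of_injective _ (add_right_injective d), card_sdiff_of_subset hsub, card_range]
  have := card_le_card hsub
  rw [card_range] at this
  omega

section DoubleMatch

variable {n k a b c d : ℕ} {x y x' y' : Fin n → Bool}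

lemma DoubleMatch.get_eq_of_mem_linkedOffsets (hxy : DoubleMatch k a b c d x y) {t : ℕ}
    (ht : t ∈ linkedOffsets k c d) : get x (b + t) = get x (a + (d + t - c)) := by
  obtain ⟨hac, hbd⟩ := hxy
  rw [kmer_eq_kmer_iff] at hac hbd
  simp only [linkedOffsets, mem_filter, mem_range, mem_Ico] at ht
  rw [hbd t ht.1, hac _ (by omega), show c + (d + t - c) = d + t by omega]

lemma DoubleMatch.eq_of_eqOn_compl_linkedPositions (h : a + d < b + c)
    (hxy : DoubleMatch k a b c d x y) (hxy' : DoubleMatch k a b c d x' y')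
    (hoff : ∀ i ∉ linkedPositions k b c d, get x i = get x' i) : x = x' := by
  refine eq_of_get_eq (congrFun (eq_of_eqOn_compl_of_exists_lt
    (T := ↑(linkedPositions k b c d)) (fun i hi => ?_) hoff))
  obtain ⟨t, ht, rfl⟩ := mem_image.1 hi
  have hlt : a + (d + t - c) < b + t := by
    simp only [linkedOffsets, mem_filter, mem_Ico] at ht
    omega
  exact ⟨_, hlt, hxy.get_eq_of_mem_linkedOffsets ht, hxy'.get_eq_of_mem_linkedOffsets ht⟩

lemma DoubleMatch.eq_of_eqOn_compl_coveredPositions (hxy : DoubleMatch k a b c d x y)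
    (hxy' : DoubleMatch k a b c d x y') (hoff : ∀ j ∉ coveredPositions k c d, get y j = get y' j) :
    y = y' := by
  obtain ⟨hac, hbd⟩ := hxy
  obtain ⟨hac', hbd'⟩ := hxy'
  rw [kmer_eq_kmer_iff] at hac hbd hac' hbd'
  refine eq_of_get_eq fun j => ?_
  by_cases hj : j ∈ coveredPositions k c d
  · simp only [coveredPositions, mem_union, mem_image, mem_range, mem_sdiff] at hj
    rcases hj with ⟨t, ht, rfl⟩ | ⟨t, ⟨ht, -⟩, rfl⟩
    · rw [← hac t ht, hac' t ht]
    · rw [← hbd t ht, hbd' t ht]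
  · exact hoff j hj

lemma card_doubleMatch_le_of_lt (hb : b + k ≤ n) (hc : c + k ≤ n) (hd : d + k ≤ n)
    (h : a + d < b + c) :
    #(univ.filter fun ω : (Fin n → Bool) × (Fin n → Bool) => DoubleMatch k a b c d ω.1 ω.2) ≤
      2 ^ (2 * n - 2 * k) := by
  have hL : ∀ i ∈ linkedPositions k b c d, i < n := by
    simp only [linkedPositions, mem_image, linkedOffsets, mem_filter, mem_range]
    omega
  have hC : ∀ j ∈ coveredPositions k c d, j < n := by
    simp only [coveredPositions, mem_union, mem_image, mem_range, mem_sdiff]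
    omega
  have hcount := card_le_pow_of_eq_of_eqOn_compl
    (s := univ.filter fun ω : (Fin n → Bool) × (Fin n → Bool) => DoubleMatch k a b c d ω.1 ω.2)
    ((linkedPositions k b c d).attachFin hL) ((coveredPositions k c d).attachFin hC) (by
      intro ω hω ω' hω' hx hy
      simp only [mem_filter, mem_univ, true_and] at hω hω'
      have hxx' := hω.eq_of_eqOn_compl_linkedPositions h hω'
        (get_eq_get_of_eqOn_compl_attachFin hL hx)
      rw [← hxx'] at hω'
      exact Prod.ext hxx' (hω.eq_of_eqOn_compl_coveredPositions hω'
        (get_eq_get_of_eqOn_compl_attachFin hC hy)))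
  have hLn := card_le_univ ((linkedPositions k b c d).attachFin hL)
  have hCn := card_le_univ ((coveredPositions k c d).attachFin hC)
  have hsum := card_linkedPositions_add_card_coveredPositions k b c d
  simp only [card_attachFin, Fintype.card_fin, Fintype.card_bool] at hcount hLn hCn
  exact hcount.trans_eq (by congr 1; omega)

lemma prob_doubleMatch_le_of_lt (hb : b + k ≤ n) (hc : c + k ≤ n) (hd : d + k ≤ n)
    (h : a + d < b + c) :
    prob (fun ω : (Fin n → Bool) × (Fin n → Bool) => DoubleMatch k a b c d ω.1 ω.2) ≤
      1 / 2 ^ (2 * k) := by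
  have hcount : (Nat.card {ω : (Fin n → Bool) × (Fin n → Bool) //
      DoubleMatch k a b c d ω.1 ω.2} : ℝ) ≤ 2 ^ (2 * n - 2 * k) := by
    rw [Nat.card_eq_fintype_card, Fintype.card_subtype]
    exact_mod_cast card_doubleMatch_le_of_lt hb hc hd h
  have hspace : (Fintype.card ((Fin n → Bool) × (Fin n → Bool)) : ℝ) =
      2 ^ (2 * n - 2 * k) * 2 ^ (2 * k) := by
    rw [← pow_add, Nat.sub_add_cancel (by omega)]
    simp [two_mul, pow_add]
  have hpos : (2 : ℝ) ^ (2 * n - 2 * k) ≠ 0 := pow_ne_zero _ two_ne_zero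
  calc _ = (Nat.card {ω : (Fin n → Bool) × (Fin n → Bool) // DoubleMatch k a b c d ω.1 ω.2} : ℝ) /
        (2 ^ (2 * n - 2 * k) * 2 ^ (2 * k)) := by rw [prob, hspace]
    _ ≤ 2 ^ (2 * n - 2 * k) / (2 ^ (2 * n - 2 * k) * 2 ^ (2 * k)) := by gcongr
    _ = 1 / 2 ^ (2 * k) := by rw [div_mul_cancel_left₀ hpos, one_div]

end DoubleMatch

theorem double_match_prob_bound_general
    (n k : ℕ)
    (a b c d : ℕ)
    (ha : a + k ≤ n) (hb : b + k ≤ n) (hc : c + k ≤ n) (hd : d + k ≤ n)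
    (hne : (d : ℤ) - (c : ℤ) ≠ (b : ℤ) - (a : ℤ)) :
    prob (fun xy : (Fin n → Bool) × (Fin n → Bool) =>
        kmer k xy.1 a = kmer k xy.2 c ∧ kmer k xy.1 b = kmer k xy.2 d) ≤
      1 / 2 ^ (2 * k) := by
  rcases Nat.lt_or_gt_of_ne (show a + d ≠ b + c by omega) with h | h
  · exact prob_doubleMatch_le_of_lt hb hc hd h
  · simpa only [DoubleMatch, and_comm] using
      prob_doubleMatch_le_of_lt (a := b) (b := a) (c := d) (d := c) ha hd hc (by omega)

/-- Lemma 4: for two independent uniformly random binary strings `x`, `y` of length `n`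
and positions `a < b`, `c`, `d` with `d - c ≠ b - a` (as integers), the probability
that `x(a) = y(c)` and `x(b) = y(d)` is at most `2^{-2k}`, even in the presence of
overlaps between `x(a)` and `x(b)` and between `y(c)` and `y(d)`. -/
theorem double_match_prob_bound
    (n k : ℕ) (hk : 1 ≤ k) (hkn : k < n)
    (a b c d : ℕ)
    (ha : a + k ≤ n) (hb : b + k ≤ n) (hc : c + k ≤ n) (hd : d + k ≤ n)
    (hab : a < b) (hne : (d : ℤ) - (c : ℤ) ≠ (b : ℤ) - (a : ℤ)) :
    prob (fun xy : (Fin n → Bool) × (Fin n → Bool) =>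
        kmer k xy.1 a = kmer k xy.2 c ∧ kmer k xy.1 b = kmer k xy.2 d) ≤
      1 / 2 ^ (2 * k) :=
  double_match_prob_bound_general n k a b c d ha hb hc hd hne
end

section
/- Fix integers n, m, k with 1 ≤ k < n and m ≥ 2. Let X = (x_1,…,x_m) be any family of binary strings of length n, let i ≠ j be indices, and let a be a position with 1 ≤ a ≤ n−k+1 such that x_i(a) = x_j(a). Define x̃_i = x_i[1:a−1] ⌢ x_j[a:n] and x̃_j = x_j[1:a−1] ⌢ x_i[a:n], and let X̃ be the family obtained from X by replacing x_i with x̃_i and x_j with x̃_j. Then x̃_i and x̃_j are strings of length n and Y(X̃) = Y(X). -/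
/-- The set of `(k+1)`-mers of the family `X = (x_1, …, x_m)`. -/
def kmerSet {n : ℕ} (m k : ℕ) (X : Fin m → Fin n → Bool) : Set (Fin (k + 1) → Bool) :=
  { w | ∃ i : Fin m, ∃ j : ℕ, j + (k + 1) ≤ n ∧ w = kmer (k + 1) (X i) j }

lemma get_eq_of_kmer_eq {n k : ℕ} {x y : Fin n → Bool} {a : ℕ}
    (h : kmer k x a = kmer k y a) {t : ℕ} (h1 : a ≤ t) (h2 : t < a + k) :
    get x t = get y t := by
  have hs : t - a < k := by omega
  have := congrFun h ⟨t - a, hs⟩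
  simpa [kmer, Nat.add_sub_cancel' h1] using this

lemma kmer_mix_lt {n k : ℕ} {x y : Fin n → Bool} {a : ℕ}
    (h : kmer k x a = kmer k y a) {p : ℕ} (hp : p < a) :
    kmer (k+1) (fun t : Fin n => if (t:ℕ) < a then x t else y t) p = kmer (k+1) x p := by
  funext t
  by_cases hc : p + (t:ℕ) < a
  · simp [kmer, _root_.get, hc]
  · have h1 : a ≤ p + (t:ℕ) := by omega
    have h2 : p + (t:ℕ) < a + k := by have := t.isLt; omega
    have key := get_eq_of_kmer_eq h h1 h2
    simp only [kmer, _root_.get, Fin.val_mk, if_neg hc] at key ⊢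
    exact key.symm

lemma kmer_mix_ge {n k a : ℕ} {x y : Fin n → Bool} {p : ℕ} (hp : a ≤ p) :
    kmer (k+1) (fun t : Fin n => if (t:ℕ) < a then x t else y t) p = kmer (k+1) y p := by
  funext t
  have : ¬ (p + (t:ℕ) < a) := by omega
  simp only [kmer, _root_.get]
  split
  · simp [this]
  · rfl

/-- If `x_i` and `x_j` share a `k`-mer at a common (0-indexed) position `a`, then
swapping the suffixes of `x_i` and `x_j` starting at position `a` yields a family
with the same `(k+1)`-mer set. The swapped strings are, by construction, length-`n`
binary strings. -/
theorem suffix_swap_same_kmerSet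
    (n m k : ℕ) (hk : 1 ≤ k) (hkn : k < n) (hm : 2 ≤ m)
    (X : Fin m → Fin n → Bool) (i j : Fin m) (hij : i ≠ j)
    (a : ℕ) (ha : a + k ≤ n)
    (hshare : kmer k (X i) a = kmer k (X j) a) :
    kmerSet m k
      (Function.update
        (Function.update X i (fun t : Fin n => if (t : ℕ) < a then X i t else X j t))
        j (fun t : Fin n => if (t : ℕ) < a then X j t else X i t)) =
    kmerSet m k X := by
  set X' := (Function.update
        (Function.update X i (fun t : Fin n => if (t : ℕ) < a then X i t else X j t))
        j (fun t : Fin n => if (t : ℕ) < a then X j t else X i t)) with hX'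
  have hX'j : X' j = fun t : Fin n => if (t : ℕ) < a then X j t else X i t := by
    simp [hX']
  have hX'i : X' i = fun t : Fin n => if (t : ℕ) < a then X i t else X j t := by
    simp [hX', Function.update_of_ne hij]
  have hX'l : ∀ l : Fin m, l ≠ i → l ≠ j → X' l = X l := by
    intro l hli hlj
    simp [hX', Function.update_of_ne hlj, Function.update_of_ne hli]
  ext w
  constructor
  · rintro ⟨l, p, hp, rfl⟩
    by_cases hlj : l = j
    · subst hlj
      by_cases hpa : p < a
      · exact ⟨l, p, hp, by rw [hX'j, kmer_mix_lt hshare.symm hpa]⟩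
      · exact ⟨i, p, hp, by rw [hX'j, kmer_mix_ge (by omega)]⟩
    · by_cases hli : l = i
      · subst hli
        by_cases hpa : p < a
        · exact ⟨l, p, hp, by rw [hX'i, kmer_mix_lt hshare hpa]⟩
        · exact ⟨j, p, hp, by rw [hX'i, kmer_mix_ge (by omega)]⟩
      · exact ⟨l, p, hp, by rw [hX'l l hli hlj]⟩
  · rintro ⟨l, p, hp, rfl⟩
    by_cases hlj : l = j
    · subst hlj
      by_cases hpa : p < a
      · exact ⟨l, p, hp, by rw [hX'j, kmer_mix_lt hshare.symm hpa]⟩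
      · exact ⟨i, p, hp, by rw [hX'i, kmer_mix_ge (by omega)]⟩
    · by_cases hli : l = i
      · subst hli
        by_cases hpa : p < a
        · exact ⟨l, p, hp, by rw [hX'i, kmer_mix_lt hshare hpa]⟩
        · exact ⟨j, p, hp, by rw [hX'j, kmer_mix_ge (by omega)]⟩
      · exact ⟨l, p, hp, by rw [hX'l l hli hlj]⟩
end

section
/- Fix integers n, m, k with 1 ≤ k < n and m ≥ 2. Let X = (x_1,…,x_m) be any family of binary strings of length n, let i ≠ j be indices, and let a < b and c be positions in {1,…,n−k+1} with c + (b − a) ≤ n − k + 1, x_i(a) = x_j(c), and x_i(b) = x_j(c + b − a). Define x̃_i = x_i[1:a−1] ⌢ x_j[c:c+b−a−1] ⌢ x_i[b:n] and x̃_j = x_j[1:c−1] ⌢ x_i[a:b−1] ⌢ x_j[c+b−a:n], and let X̃ be the family obtained from X by replacing x_i with x̃_i and x_j with x̃_j. Then x̃_i and x̃_j are strings of length n and Y(X̃) = Y(X). -/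
lemma get_pos {n : ℕ} (x : Fin n → Bool) {t : ℕ} (h : t < n) : get x t = x ⟨t, h⟩ :=
  dif_pos h

/-- If `x_i(a) = x_j(c)` and `x_i(b) = x_j(c + b - a)` (equal-gap shared `k`-mers,
0-indexed positions, `a < b`), then swapping the middle parts of `x_i` and `x_j`
(`x̃_i = x_i[0:a) ⌢ x_j[c:c+b-a) ⌢ x_i[b:n)` and
 `x̃_j = x_j[0:c) ⌢ x_i[a:b) ⌢ x_j[c+b-a:n)`)
yields a family with the same `(k+1)`-mer set. The swapped strings are, by
construction, length-`n` binary strings. -/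
theorem middle_swap_same_kmerSet
    (n m k : ℕ) (hk : 1 ≤ k) (hkn : k < n) (hm : 2 ≤ m)
    (X : Fin m → Fin n → Bool) (i j : Fin m) (hij : i ≠ j)
    (a b c : ℕ) (hab : a < b) (hb : b + k ≤ n) (hc : c + (b - a) + k ≤ n)
    (hshare1 : kmer k (X i) a = kmer k (X j) c)
    (hshare2 : kmer k (X i) b = kmer k (X j) (c + (b - a))) :
    kmerSet m k
      (Function.update
        (Function.update X i
          (fun t : Fin n =>
            if (t : ℕ) < a then X i t
            else if (t : ℕ) < b then get (X j) (c + ((t : ℕ) - a))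
            else X i t))
        j
        (fun t : Fin n =>
          if (t : ℕ) < c then X j t
          else if (t : ℕ) < c + (b - a) then get (X i) (a + ((t : ℕ) - c))
          else X j t)) =
    kmerSet m k X := by
  classical
  have hs1 : ∀ s, s < k → get (X i) (a + s) = get (X j) (c + s) := by
    intro s hs; exact congrFun hshare1 ⟨s, hs⟩
  have hs2 : ∀ s, s < k → get (X i) (b + s) = get (X j) (c + (b - a) + s) := by
    intro s hs; exact congrFun hshare2 ⟨s, hs⟩
  set yt : Fin n → Bool := (fun t : Fin n =>
            if (t : ℕ) < a then X i t
            else if (t : ℕ) < b then get (X j) (c + ((t : ℕ) - a))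
            else X i t) with hyt
  set zt : Fin n → Bool := (fun t : Fin n =>
          if (t : ℕ) < c then X j t
          else if (t : ℕ) < c + (b - a) then get (X i) (a + ((t : ℕ) - c))
          else X j t) with hzt
  set X' := Function.update (Function.update X i yt) j zt with hX'
  have hX'j : X' j = zt := Function.update_self _ _ _
  have hX'i : X' i = yt := by
    rw [hX', Function.update_of_ne hij, Function.update_self]
  have hX'l : ∀ l, l ≠ i → l ≠ j → X' l = X l := by
    intro l hli hlj
    rw [hX', Function.update_of_ne hlj, Function.update_of_ne hli]
  -- pointwise lemmas
  have gy1 : ∀ t, t < n → t < a + k → get yt t = get (X i) t := by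
    intro t htn ht
    rw [get_pos yt htn, get_pos (X i) htn, hyt]
    show (if t < a then X i ⟨t, htn⟩ else if t < b then get (X j) (c + (t - a))
      else X i ⟨t, htn⟩) = X i ⟨t, htn⟩
    split_ifs with h1 h2
    · rfl
    · have hh := hs1 (t - a) (by omega)
      rw [show a + (t - a) = t from by omega] at hh
      rw [← hh, get_pos (X i) htn]
    · rfl
  have gy2 : ∀ t, t < n → a ≤ t → t < b + k → get yt t = get (X j) (c + (t - a)) := by
    intro t htn h1 h2
    rw [get_pos yt htn, hyt]
    show (if t < a then X i ⟨t, htn⟩ else if t < b then get (X j) (c + (t - a))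
      else X i ⟨t, htn⟩) = get (X j) (c + (t - a))
    split_ifs with ha' hb'
    · exact absurd ha' (by omega)
    · rfl
    · have hh := hs2 (t - b) (by omega)
      rw [show b + (t - b) = t from by omega,
          show c + (b - a) + (t - b) = c + (t - a) from by omega] at hh
      rw [← hh, get_pos (X i) htn]
  have gy3 : ∀ t, t < n → b ≤ t → get yt t = get (X i) t := by
    intro t htn ht
    rw [get_pos yt htn, get_pos (X i) htn, hyt]
    show (if t < a then X i ⟨t, htn⟩ else if t < b then get (X j) (c + (t - a))
      else X i ⟨t, htn⟩) = X i ⟨t, htn⟩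
    split_ifs with h1 h2
    · rfl
    · exact absurd h2 (by omega)
    · rfl
  have gz1 : ∀ t, t < n → t < c + k → get zt t = get (X j) t := by
    intro t htn ht
    rw [get_pos zt htn, get_pos (X j) htn, hzt]
    show (if t < c then X j ⟨t, htn⟩ else if t < c + (b - a) then get (X i) (a + (t - c))
      else X j ⟨t, htn⟩) = X j ⟨t, htn⟩
    split_ifs with h1 h2
    · rfl
    · have hh := hs1 (t - c) (by omega)
      rw [show c + (t - c) = t from by omega] at hh
      rw [show a + (t - c) = a + (t - c) from rfl, hh, get_pos (X j) htn]
    · rfl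
  have gz2 : ∀ t, t < n → c ≤ t → t < c + (b - a) + k → get zt t = get (X i) (a + (t - c)) := by
    intro t htn h1 h2
    rw [get_pos zt htn, hzt]
    show (if t < c then X j ⟨t, htn⟩ else if t < c + (b - a) then get (X i) (a + (t - c))
      else X j ⟨t, htn⟩) = get (X i) (a + (t - c))
    split_ifs with hc' hb'
    · exact absurd hc' (by omega)
    · rfl
    · have hh := hs2 (t - (c + (b - a))) (by omega)
      rw [show c + (b - a) + (t - (c + (b - a))) = t from by omega,
          show b + (t - (c + (b - a))) = a + (t - c) from by omega] at hh
      rw [hh, get_pos (X j) htn]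
  have gz3 : ∀ t, t < n → c + (b - a) ≤ t → get zt t = get (X j) t := by
    intro t htn ht
    rw [get_pos zt htn, get_pos (X j) htn, hzt]
    show (if t < c then X j ⟨t, htn⟩ else if t < c + (b - a) then get (X i) (a + (t - c))
      else X j ⟨t, htn⟩) = X j ⟨t, htn⟩
    split_ifs with h1 h2
    · rfl
    · exact absurd h2 (by omega)
    · rfl
  -- kmer-level lemmas
  have ky1 : ∀ p, p + (k+1) ≤ n → p < a → kmer (k+1) yt p = kmer (k+1) (X i) p := by
    intro p hpn hpa; funext s
    exact gy1 (p + (s : ℕ)) (by omega) (by omega)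
  have ky2 : ∀ p, p + (k+1) ≤ n → a ≤ p → p < b →
      kmer (k+1) yt p = kmer (k+1) (X j) (c + (p - a)) := by
    intro p hpn h1 h2; funext s
    have h := gy2 (p + (s : ℕ)) (by omega) (by omega) (by omega)
    rw [show c + (p + (s : ℕ) - a) = c + (p - a) + (s : ℕ) from by omega] at h
    exact h
  have ky3 : ∀ p, p + (k+1) ≤ n → b ≤ p → kmer (k+1) yt p = kmer (k+1) (X i) p := by
    intro p hpn hpb; funext s
    exact gy3 (p + (s : ℕ)) (by omega) (by omega)
  have kz1 : ∀ p, p + (k+1) ≤ n → p < c → kmer (k+1) zt p = kmer (k+1) (X j) p := by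
    intro p hpn hpc; funext s
    exact gz1 (p + (s : ℕ)) (by omega) (by omega)
  have kz2 : ∀ p, p + (k+1) ≤ n → c ≤ p → p < c + (b - a) →
      kmer (k+1) zt p = kmer (k+1) (X i) (a + (p - c)) := by
    intro p hpn h1 h2; funext s
    have h := gz2 (p + (s : ℕ)) (by omega) (by omega) (by omega)
    rw [show a + (p + (s : ℕ) - c) = a + (p - c) + (s : ℕ) from by omega] at h
    exact h
  have kz3 : ∀ p, p + (k+1) ≤ n → c + (b - a) ≤ p →
      kmer (k+1) zt p = kmer (k+1) (X j) p := by
    intro p hpn hp; funext s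
    exact gz3 (p + (s : ℕ)) (by omega) (by omega)
  have ry2 : ∀ p, p + (k+1) ≤ n → a ≤ p → p < b →
      kmer (k+1) (X i) p = kmer (k+1) zt (c + (p - a)) := by
    intro p hpn h1 h2; funext s
    have h := gz2 (c + (p - a) + (s : ℕ)) (by omega) (by omega) (by omega)
    rw [show a + (c + (p - a) + (s : ℕ) - c) = p + (s : ℕ) from by omega] at h
    exact h.symm
  have rz2 : ∀ p, p + (k+1) ≤ n → c ≤ p → p < c + (b - a) →
      kmer (k+1) (X j) p = kmer (k+1) yt (a + (p - c)) := by
    intro p hpn h1 h2; funext s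
    have h := gy2 (a + (p - c) + (s : ℕ)) (by omega) (by omega) (by omega)
    rw [show c + (a + (p - c) + (s : ℕ) - a) = p + (s : ℕ) from by omega] at h
    exact h.symm
  -- main set equality
  ext w
  simp only [kmerSet, Set.mem_setOf_eq]
  constructor
  · rintro ⟨l, p, hpn, rfl⟩
    by_cases hlj : l = j
    · rw [hlj, hX'j]
      rcases lt_or_ge p c with h1 | h1
      · exact ⟨j, p, hpn, by rw [kz1 p hpn h1]⟩
      rcases lt_or_ge p (c + (b - a)) with h2 | h2
      · exact ⟨i, a + (p - c), by omega, by rw [kz2 p hpn h1 h2]⟩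
      · exact ⟨j, p, hpn, by rw [kz3 p hpn h2]⟩
    by_cases hli : l = i
    · rw [hli, hX'i]
      rcases lt_or_ge p a with h1 | h1
      · exact ⟨i, p, hpn, by rw [ky1 p hpn h1]⟩
      rcases lt_or_ge p b with h2 | h2
      · exact ⟨j, c + (p - a), by omega, by rw [ky2 p hpn h1 h2]⟩
      · exact ⟨i, p, hpn, by rw [ky3 p hpn h2]⟩
    · exact ⟨l, p, hpn, by rw [hX'l l hli hlj]⟩
  · rintro ⟨l, p, hpn, rfl⟩
    by_cases hlj : l = j
    · rw [hlj]
      rcases lt_or_ge p c with h1 | h1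
      · exact ⟨j, p, hpn, by rw [hX'j, kz1 p hpn h1]⟩
      rcases lt_or_ge p (c + (b - a)) with h2 | h2
      · exact ⟨i, a + (p - c), by omega, by rw [hX'i, ← rz2 p hpn h1 h2]⟩
      · exact ⟨j, p, hpn, by rw [hX'j, kz3 p hpn h2]⟩
    by_cases hli : l = i
    · rw [hli]
      rcases lt_or_ge p a with h1 | h1
      · exact ⟨i, p, hpn, by rw [hX'i, ky1 p hpn h1]⟩
      rcases lt_or_ge p b with h2 | h2
      · exact ⟨j, c + (p - a), by omega, by rw [hX'j, ← ry2 p hpn h1 h2]⟩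
      · exact ⟨i, p, hpn, by rw [hX'i, ky3 p hpn h2]⟩
    · exact ⟨l, p, hpn, by rw [hX'l l hli hlj]⟩
end

section
/- Fix integers n, m, k with 1 ≤ k < n and m ≥ 1. Let X = (x_1,…,x_m) be a family of binary strings of length n for which none of the events A, B, C occurs. Then for every family X' = (x'_1,…,x'_m) of m binary strings of length n with Y(X') = Y(X), and for every binary word v of length k, the multiplicity of v in X' equals the multiplicity of v in X. (Lemma 2: node multiplicities in the de Bruijn graph are fully determined.) -/
/-- Event B: two overlapping repeated `k`-mers that do not merely form a longer repeat. -/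
def eventB {n : ℕ} (m k : ℕ) (X : Fin m → Fin n → Bool) : Prop :=
  ∃ i j l : Fin m, ∃ a b c d : ℕ,
    a + k ≤ n ∧ b + k ≤ n ∧ c + k ≤ n ∧ d + k ≤ n ∧
    a ≤ b ∧ b < a + k ∧
    kmer k (X i) a = kmer k (X j) c ∧
    kmer k (X i) b = kmer k (X l) d ∧
    (i, a) ≠ (j, c) ∧ (i, b) ≠ (l, d) ∧
    (j ≠ l ∨ (j = l ∧ (d : ℤ) - (c : ℤ) ≠ (b : ℤ) - (a : ℤ)))

/-- Event C: the first or last `k`-mer of some string appears elsewhere in the family. -/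
def eventC {n : ℕ} (m k : ℕ) (X : Fin m → Fin n → Bool) : Prop :=
  ∃ i j : Fin m, ∃ a : ℕ, a + k ≤ n ∧
    ((kmer k (X i) 0 = kmer k (X j) a ∧ (j, a) ≠ (i, (0 : ℕ))) ∨
      (kmer k (X i) (n - k) = kmer k (X j) a ∧ (j, a) ≠ (i, n - k)))

/-- The multiplicity of a word `v` of length `k` in the family `X`: the number of
pairs `(i, a)` with `x_i(a) = v`. -/
noncomputable def mult {n : ℕ} (m k : ℕ) (X : Fin m → Fin n → Bool)
    (v : Fin k → Bool) : ℕ :=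
  Nat.card {p : Fin m × ℕ // p.2 + k ≤ n ∧ kmer k (X p.1) p.2 = v}

namespace MFD

def pre {k : ℕ} (w : Fin (k+1) → Bool) : Fin k → Bool := fun t => w t.castSucc
def suf {k : ℕ} (w : Fin (k+1) → Bool) : Fin k → Bool := fun t => w t.succ

lemma pre_kmer {n : ℕ} (k : ℕ) (x : Fin n → Bool) (a : ℕ) :
    pre (kmer (k+1) x a) = kmer k x a := by
  funext t; simp [pre, kmer]

lemma suf_kmer {n : ℕ} (k : ℕ) (x : Fin n → Bool) (a : ℕ) :
    suf (kmer (k+1) x a) = kmer k x (a+1) := by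
  funext t; simp only [suf, kmer, Fin.val_succ]; congr 1; omega

/-- occurrences as a finset -/
def occF {n m : ℕ} (k : ℕ) (Z : Fin m → Fin n → Bool) (v : Fin k → Bool) :
    Finset (Fin m × ℕ) :=
  (Finset.univ ×ˢ Finset.range (n+1)).filter
    (fun p => p.2 + k ≤ n ∧ kmer k (Z p.1) p.2 = v)

lemma mem_occF {n m : ℕ} {k : ℕ} {Z : Fin m → Fin n → Bool} {v : Fin k → Bool}
    {p : Fin m × ℕ} : p ∈ occF k Z v ↔ p.2 + k ≤ n ∧ kmer k (Z p.1) p.2 = v := by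
  simp only [occF, Finset.mem_filter, Finset.mem_product, Finset.mem_univ, Finset.mem_range,
    true_and]
  constructor
  · tauto
  · intro h; exact ⟨by omega, h⟩

lemma mult_eq_occF {n m : ℕ} (k : ℕ) (Z : Fin m → Fin n → Bool) (v : Fin k → Bool) :
    mult m k Z v = (occF k Z v).card := by
  rw [mult, ← Nat.card_eq_finsetCard]
  exact Nat.card_congr (Equiv.subtypeEquivRight (fun p => by
    rw [mem_occF]))

lemma mem_kmerSet_iff {n m : ℕ} {k : ℕ} {Z : Fin m → Fin n → Bool} {w : Fin (k+1) → Bool} :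
    w ∈ kmerSet m k Z ↔ (occF (k+1) Z w).Nonempty := by
  constructor
  · rintro ⟨i, j, hj, hw⟩
    exact ⟨(i, j), mem_occF.2 ⟨hj, hw.symm⟩⟩
  · rintro ⟨p, hp⟩
    rw [mem_occF] at hp
    exact ⟨p.1, p.2, hp.1, hp.2.symm⟩

variable {n m k : ℕ}

/-- number of strings starting with `v` -/
def sF (k : ℕ) (Z : Fin m → Fin n → Bool) (v : Fin k → Bool) : ℕ :=
  (Finset.univ.filter (fun i : Fin m => kmer k (Z i) 0 = v)).card

/-- number of strings ending with `v` -/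
def eF (k : ℕ) (Z : Fin m → Fin n → Bool) (v : Fin k → Bool) : ℕ :=
  (Finset.univ.filter (fun i : Fin m => kmer k (Z i) (n - k) = v)).card

lemma sum_sF (Z : Fin m → Fin n → Bool) :
    ∑ v : Fin k → Bool, sF k Z v = m := by
  have := Finset.card_eq_sum_card_fiberwise
    (f := fun i : Fin m => kmer k (Z i) 0) (s := Finset.univ) (t := Finset.univ)
    (fun x _ => Finset.mem_univ _)
  simpa [sF] using this.symm

lemma sum_eF (Z : Fin m → Fin n → Bool) :
    ∑ v : Fin k → Bool, eF k Z v = m := by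
  have := Finset.card_eq_sum_card_fiberwise
    (f := fun i : Fin m => kmer k (Z i) (n - k)) (s := Finset.univ) (t := Finset.univ)
    (fun x _ => Finset.mem_univ _)
  simpa [eF] using this.symm

lemma sum_occF_card (Z : Fin m → Fin n → Bool) :
    ∑ w : Fin (k+1) → Bool, (occF (k+1) Z w).card = m * (n - k) := by
  classical
  set D : Finset (Fin m × ℕ) :=
    (Finset.univ ×ˢ Finset.range (n+1)).filter (fun p => p.2 + (k+1) ≤ n) with hD
  have hDcard : D.card = m * (n - k) := by
    have : D = Finset.univ ×ˢ Finset.range (n - k) := by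
      ext p
      simp only [hD, Finset.mem_filter, Finset.mem_product, Finset.mem_univ, Finset.mem_range,
        true_and]
      omega
    rw [this, Finset.card_product, Finset.card_range, Finset.card_univ, Fintype.card_fin]
  have hfib := Finset.card_eq_sum_card_fiberwise
    (f := fun p : Fin m × ℕ => kmer (k+1) (Z p.1) p.2) (s := D) (t := Finset.univ)
    (fun x _ => Finset.mem_univ _)
  rw [hDcard] at hfib
  rw [hfib]
  apply Finset.sum_congr rfl
  intro w _
  congr 1
  rw [hD, Finset.filter_filter]
  rfl

lemma occF_card_suffix (hkn : k ≤ n) (Z : Fin m → Fin n → Bool) (v : Fin k → Bool) :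
    (occF k Z v).card
      = sF k Z v + ∑ w : Fin (k+1) → Bool,
          (if suf w = v then (occF (k+1) Z w).card else 0) := by
  classical
  rw [← Finset.card_filter_add_card_filter_not (s := occF k Z v)
    (p := fun p => p.2 = 0)]
  congr 1
  · -- positions 0 ↔ starting strings
    refine Finset.card_bij' (fun p _ => p.1) (fun i _ => ((i, 0) : Fin m × ℕ))
      ?_ ?_ ?_ ?_
    · rintro ⟨i, a⟩ hp
      simp only [Finset.mem_filter, mem_occF] at hp
      obtain ⟨⟨_, h2⟩, h3⟩ := hp
      subst h3
      simp only [Finset.mem_filter, Finset.mem_univ, true_and]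
      exact h2
    · intro i hi
      simp only [Finset.mem_filter, Finset.mem_univ, true_and] at hi
      simp only [Finset.mem_filter, mem_occF]
      exact ⟨⟨by omega, hi⟩, by trivial⟩
    · rintro ⟨i, a⟩ hp
      simp only [Finset.mem_filter, mem_occF] at hp
      simp only [Prod.mk.injEq]
      exact ⟨by trivial, hp.2.symm⟩
    · intro i _; rfl
  · -- positions > 0 ↔ edge occurrences with suffix v
    set E : Finset (Fin m × ℕ) :=
      (Finset.univ ×ˢ Finset.range (n+1)).filter
        (fun p => p.2 + (k+1) ≤ n ∧ suf (kmer (k+1) (Z p.1) p.2) = v) with hE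
    have hmemE : ∀ p : Fin m × ℕ, p ∈ E ↔
        p.2 + (k+1) ≤ n ∧ suf (kmer (k+1) (Z p.1) p.2) = v := by
      intro p
      simp only [hE, Finset.mem_filter, Finset.mem_product, Finset.mem_univ, Finset.mem_range,
        true_and]
      constructor
      · tauto
      · intro h; exact ⟨by omega, h⟩
    have hcard : ((occF k Z v).filter (fun p => ¬ p.2 = 0)).card = E.card := by
      refine Finset.card_bij' (fun p _ => (p.1, p.2 - 1)) (fun p _ => (p.1, p.2 + 1))
        ?_ ?_ ?_ ?_
      · rintro ⟨i, a⟩ hp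
        simp only [Finset.mem_filter, mem_occF] at hp
        rw [hmemE]
        simp only
        refine ⟨by omega, ?_⟩
        rw [suf_kmer]
        have : a - 1 + 1 = a := by omega
        rw [this]
        exact hp.1.2
      · rintro ⟨i, a⟩ hp
        rw [hmemE] at hp
        simp only at hp
        simp only [Finset.mem_filter, mem_occF]
        refine ⟨⟨by omega, ?_⟩, by omega⟩
        rw [← suf_kmer]; exact hp.2
      · rintro ⟨i, a⟩ hp
        simp only [Finset.mem_filter, mem_occF] at hp
        simp only [Prod.mk.injEq]
        exact ⟨by trivial, by omega⟩
      · rintro ⟨i, a⟩ _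
        simp only [Prod.mk.injEq]
        exact ⟨by trivial, by omega⟩
    rw [hcard]
    have hfib := Finset.card_eq_sum_card_fiberwise
      (f := fun p : Fin m × ℕ => kmer (k+1) (Z p.1) p.2) (s := E) (t := Finset.univ)
      (fun x _ => Finset.mem_univ _)
    rw [hfib]
    apply Finset.sum_congr rfl
    intro w _
    by_cases hw : suf w = v
    · rw [if_pos hw]
      congr 1
      ext p
      simp only [Finset.mem_filter, hmemE, mem_occF]
      constructor
      · rintro ⟨⟨h1, _⟩, h3⟩; exact ⟨h1, h3⟩
      · rintro ⟨h1, h3⟩; exact ⟨⟨h1, h3 ▸ hw⟩, h3⟩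
    · rw [if_neg hw]
      rw [Finset.card_eq_zero]
      ext p
      simp only [Finset.mem_filter, hmemE, Finset.notMem_empty, iff_false, not_and]
      rintro ⟨h1, h2⟩ h3
      exact hw (h3 ▸ h2)

lemma occF_card_prefix (hkn : k ≤ n) (Z : Fin m → Fin n → Bool) (v : Fin k → Bool) :
    (occF k Z v).card
      = eF k Z v + ∑ w : Fin (k+1) → Bool,
          (if pre w = v then (occF (k+1) Z w).card else 0) := by
  classical
  rw [← Finset.card_filter_add_card_filter_not (s := occF k Z v)
    (p := fun p => p.2 = n - k)]
  congr 1
  · -- positions n-k ↔ ending strings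
    refine Finset.card_bij' (fun p _ => p.1) (fun i _ => ((i, n - k) : Fin m × ℕ))
      ?_ ?_ ?_ ?_
    · rintro ⟨i, a⟩ hp
      simp only [Finset.mem_filter, mem_occF] at hp
      obtain ⟨⟨_, h2⟩, h3⟩ := hp
      subst h3
      simp only [Finset.mem_filter, Finset.mem_univ, true_and]
      exact h2
    · intro i hi
      simp only [Finset.mem_filter, Finset.mem_univ, true_and] at hi
      simp only [Finset.mem_filter, mem_occF]
      exact ⟨⟨by omega, hi⟩, by trivial⟩
    · rintro ⟨i, a⟩ hp
      simp only [Finset.mem_filter, mem_occF] at hp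
      simp only [Prod.mk.injEq]
      exact ⟨by trivial, hp.2.symm⟩
    · intro i _; rfl
  · -- other positions = edge occurrences with prefix v
    have hset : (occF k Z v).filter (fun p => ¬ p.2 = n - k)
        = (Finset.univ ×ˢ Finset.range (n+1)).filter
            (fun p => p.2 + (k+1) ≤ n ∧ pre (kmer (k+1) (Z p.1) p.2) = v) := by
      ext p
      simp only [Finset.mem_filter, mem_occF, Finset.mem_product, Finset.mem_univ,
        Finset.mem_range, true_and, pre_kmer]
      constructor
      · rintro ⟨⟨h1, h2⟩, h3⟩
        exact ⟨by omega, by omega, h2⟩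
      · rintro ⟨h0, h1, h2⟩
        exact ⟨⟨by omega, h2⟩, by omega⟩
    rw [hset]
    have hfib := Finset.card_eq_sum_card_fiberwise
      (f := fun p : Fin m × ℕ => kmer (k+1) (Z p.1) p.2)
      (s := (Finset.univ ×ˢ Finset.range (n+1)).filter
            (fun p => p.2 + (k+1) ≤ n ∧ pre (kmer (k+1) (Z p.1) p.2) = v))
      (t := Finset.univ) (fun x _ => Finset.mem_univ _)
    rw [hfib]
    apply Finset.sum_congr rfl
    intro w _
    by_cases hw : pre w = v
    · rw [if_pos hw]
      congr 1
      ext p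
      simp only [Finset.mem_filter, Finset.mem_product, Finset.mem_univ, Finset.mem_range,
        true_and, mem_occF]
      constructor
      · rintro ⟨⟨_, h1, _⟩, h3⟩; exact ⟨h1, h3⟩
      · rintro ⟨h1, h3⟩; exact ⟨⟨by omega, h1, h3 ▸ hw⟩, h3⟩
    · rw [if_neg hw]
      rw [Finset.card_eq_zero]
      ext p
      simp only [Finset.mem_filter, Finset.mem_product, Finset.mem_univ, Finset.mem_range,
        true_and, Finset.notMem_empty, iff_false, not_and]
      intro h h3
      exact hw (h3 ▸ h.2.2)

section main
variable {X Z : Fin m → Fin n → Bool}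

/-- No `k`-mer occurs at three distinct positions (else event B). -/
lemma atMostTwo (hk : 1 ≤ k) (hB : ¬ eventB m k X) {i j : Fin m} {a c : ℕ}
    (ha : a + k ≤ n) (hc : c + k ≤ n) (hne : (i, a) ≠ (j, c))
    (he : kmer k (X i) a = kmer k (X j) c) :
    ∀ i' a', a' + k ≤ n → kmer k (X i') a' = kmer k (X i) a →
      (i', a') = (i, a) ∨ (i', a') = (j, c) := by
  intro i' a' ha' he'
  by_contra hcon
  push_neg at hcon
  apply hB
  refine ⟨i', i, j, a', a', a, c, ha', ha', ha, hc, le_rfl, by omega, he', ?_, hcon.1, hcon.2, ?_⟩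
  · exact he'.trans he
  · by_cases hij : i = j
    · refine Or.inr ⟨hij, ?_⟩
      have : a ≠ c := by
        intro hac
        exact hne (by rw [hij, hac])
      intro hcontra
      omega
    · exact Or.inl hij

/-- A repeated `k`-mer pair: different strings, both occurrences interior. -/
lemma distinct_occ_basic (hkn : k < n) (hA : ¬ eventA m k X) (hC : ¬ eventC m k X)
    {i j : Fin m} {a c : ℕ} (ha : a + k ≤ n) (hc : c + k ≤ n)
    (hne : (i, a) ≠ (j, c)) (he : kmer k (X i) a = kmer k (X j) c) :
    i ≠ j ∧ 0 < a ∧ a + k < n ∧ 0 < c ∧ c + k < n := by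
  have hij : i ≠ j := by
    intro hij
    subst hij
    have hac : a ≠ c := fun h => hne (by rw [h])
    exact hA ⟨i, a, c, hac, ha, hc, he⟩
  have ha0 : 0 < a := by
    rcases Nat.eq_zero_or_pos a with h | h
    · subst h
      exact absurd (show eventC m k X from
        ⟨i, j, c, hc, Or.inl ⟨he, fun hpq => hij (congrArg Prod.fst hpq).symm⟩⟩) hC
    · exact h
  have hc0 : 0 < c := by
    rcases Nat.eq_zero_or_pos c with h | h
    · subst h
      exact absurd (show eventC m k X from
        ⟨j, i, a, ha, Or.inl ⟨he.symm, fun hpq => hij (congrArg Prod.fst hpq)⟩⟩) hC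
    · exact h
  have hak : a + k < n := by
    rcases Nat.lt_or_ge (a + k) n with h | h
    · exact h
    · have haeq : a = n - k := by omega
      subst haeq
      exact absurd (show eventC m k X from
        ⟨i, j, c, hc, Or.inr ⟨he, fun hpq => hij (congrArg Prod.fst hpq).symm⟩⟩) hC
  have hck : c + k < n := by
    rcases Nat.lt_or_ge (c + k) n with h | h
    · exact h
    · have hceq : c = n - k := by omega
      subst hceq
      exact absurd (show eventC m k X from
        ⟨j, i, a, ha, Or.inr ⟨he.symm, fun hpq => hij (congrArg Prod.fst hpq)⟩⟩) hC
  exact ⟨hij, ha0, hak, hc0, hck⟩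

lemma occZ_nonempty (hY : kmerSet m k Z = kmerSet m k X)
    {i : Fin m} {a : ℕ} (ha : a + (k+1) ≤ n) :
    (occF (k+1) Z (kmer (k+1) (X i) a)).Nonempty := by
  rw [← mem_kmerSet_iff, hY]
  exact ⟨i, a, ha, rfl⟩

lemma occZ_to_X (hY : kmerSet m k Z = kmerSet m k X)
    {i : Fin m} {a : ℕ} (ha : a + (k+1) ≤ n) :
    ∃ i' a', a' + (k+1) ≤ n ∧ kmer (k+1) (X i') a' = kmer (k+1) (Z i) a := by
  have : kmer (k+1) (Z i) a ∈ kmerSet m k X := by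
    rw [← hY]
    exact ⟨i, a, ha, rfl⟩
  obtain ⟨i', a', ha', he⟩ := this
  exact ⟨i', a', ha', he.symm⟩

lemma sX_le_sZ (hkn : k < n) (hC : ¬ eventC m k X)
    (hY : kmerSet m k Z = kmerSet m k X) (v : Fin k → Bool) :
    sF k X v ≤ sF k Z v := by
  rcases Nat.eq_zero_or_pos (sF k X v) with h0 | h0
  · omega
  have hx : ∃ i : Fin m, kmer k (X i) 0 = v := by
    obtain ⟨i, hi⟩ := Finset.card_pos.1 h0
    exact ⟨i, (Finset.mem_filter.1 hi).2⟩
  obtain ⟨i, hi⟩ := hx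
  have hle1 : sF k X v ≤ 1 := by
    by_contra h2
    push_neg at h2
    obtain ⟨i1, hi1, i2, hi2, h12⟩ := Finset.one_lt_card.1 h2
    simp only [Finset.mem_filter, Finset.mem_univ, true_and] at hi1 hi2
    exact hC ⟨i1, i2, 0, by omega, Or.inl ⟨hi1.trans hi2.symm,
      fun hpq => h12 (congrArg Prod.fst hpq).symm⟩⟩
  have hz1 : 1 ≤ sF k Z v := by
    obtain ⟨⟨i', a'⟩, hp⟩ := occZ_nonempty (i := i) (a := 0) hY (by omega)
    rw [mem_occF] at hp
    obtain ⟨ha', hw⟩ := hp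
    simp only at ha' hw
    have ha0 : a' = 0 := by
      by_contra hne0
      obtain ⟨i'', a'', ha'', he''⟩ := occZ_to_X (i := i') (a := a' - 1) hY (by omega)
      have hocc : kmer k (X i'') (a'' + 1) = v := by
        have h1 : suf (kmer (k+1) (X i'') a'') = kmer k (X i'') (a'' + 1) := suf_kmer k _ _
        have h2 : suf (kmer (k+1) (Z i') (a' - 1)) = kmer k (Z i') a' := by
          rw [suf_kmer]
          have hx : a' - 1 + 1 = a' := by omega
          rw [hx]
        have h3 : kmer k (Z i') a' = pre (kmer (k+1) (Z i') a') := (pre_kmer k _ _).symm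
        have h4 : pre (kmer (k+1) (X i) 0) = kmer k (X i) 0 := pre_kmer k _ _
        rw [← h1, he'', h2, h3, hw, h4, hi]
      exact absurd (show eventC m k X from
        ⟨i, i'', a'' + 1, by omega, Or.inl ⟨hi.trans hocc.symm,
          fun hpq => by have := congrArg Prod.snd hpq; simp at this⟩⟩) hC
    subst ha0
    apply Finset.card_pos.2
    refine ⟨i', Finset.mem_filter.2 ⟨Finset.mem_univ _, ?_⟩⟩
    have : kmer k (Z i') 0 = pre (kmer (k+1) (Z i') 0) := (pre_kmer k _ _).symm
    rw [this, hw, pre_kmer, hi]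
  omega

lemma eX_le_eZ (hkn : k < n) (hC : ¬ eventC m k X)
    (hY : kmerSet m k Z = kmerSet m k X) (v : Fin k → Bool) :
    eF k X v ≤ eF k Z v := by
  rcases Nat.eq_zero_or_pos (eF k X v) with h0 | h0
  · omega
  have hx : ∃ i : Fin m, kmer k (X i) (n - k) = v := by
    obtain ⟨i, hi⟩ := Finset.card_pos.1 h0
    exact ⟨i, (Finset.mem_filter.1 hi).2⟩
  obtain ⟨i, hi⟩ := hx
  have hle1 : eF k X v ≤ 1 := by
    by_contra h2
    push_neg at h2
    obtain ⟨i1, hi1, i2, hi2, h12⟩ := Finset.one_lt_card.1 h2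
    simp only [Finset.mem_filter, Finset.mem_univ, true_and] at hi1 hi2
    exact hC ⟨i1, i2, n - k, by omega, Or.inr ⟨hi1.trans hi2.symm,
      fun hpq => h12 (congrArg Prod.fst hpq).symm⟩⟩
  have hz1 : 1 ≤ eF k Z v := by
    obtain ⟨⟨i', a'⟩, hp⟩ := occZ_nonempty (i := i) (a := n - k - 1) hY (by omega)
    rw [mem_occF] at hp
    obtain ⟨ha', hw⟩ := hp
    simp only at ha' hw
    have hocc' : kmer k (Z i') (a' + 1) = v := by
      have h1 : suf (kmer (k+1) (Z i') a') = kmer k (Z i') (a' + 1) := suf_kmer k _ _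
      have h2 : suf (kmer (k+1) (X i) (n - k - 1)) = kmer k (X i) (n - k) := by
        rw [suf_kmer]
        have hx : n - k - 1 + 1 = n - k := by omega
        rw [hx]
      rw [← h1, hw, h2, hi]
    have ha0 : a' + 1 = n - k := by
      by_contra hne0
      have hlt : a' + 1 + (k + 1) ≤ n := by omega
      obtain ⟨i'', a'', ha'', he''⟩ := occZ_to_X (i := i') (a := a' + 1) hY hlt
      have hocc : kmer k (X i'') a'' = v := by
        have h3 : pre (kmer (k+1) (X i'') a'') = kmer k (X i'') a'' := pre_kmer k _ _
        rw [← h3, he'', pre_kmer, hocc']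
      exact absurd (show eventC m k X from
        ⟨i, i'', a'', by omega, Or.inr ⟨hi.trans hocc.symm,
          fun hpq => by
            have h5 := congrArg Prod.snd hpq
            simp only at h5
            omega⟩⟩) hC
    apply Finset.card_pos.2
    refine ⟨i', Finset.mem_filter.2 ⟨Finset.mem_univ _, ?_⟩⟩
    rw [← ha0]
    exact hocc'
  omega

/-- Key lemma: a `(k+1)`-mer occurring twice in `X` occurs at least twice in `Z`. -/
lemma key_double (hk : 1 ≤ k) (hkn : k < n)
    (hA : ¬ eventA m k X) (hB : ¬ eventB m k X) (hC : ¬ eventC m k X)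
    (hY : kmerSet m k Z = kmerSet m k X)
    (heF : ∀ v : Fin k → Bool, eF k Z v = eF k X v) :
    ∀ a : ℕ, ∀ (i j : Fin m) (c : ℕ) (w : Fin (k+1) → Bool),
      a + (k+1) ≤ n → c + (k+1) ≤ n →
      kmer (k+1) (X i) a = w → kmer (k+1) (X j) c = w → (i, a) ≠ (j, c) →
      2 ≤ (occF (k+1) Z w).card := by
  intro a
  induction a using Nat.strong_induction_on with
  | _ a IH =>
    intro i j c w ha hc hwa hwc hne
    set v : Fin k → Bool := kmer k (X i) a with hv
    have hvc : kmer k (X j) c = v := by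
      rw [hv, ← pre_kmer k (X i) a, ← pre_kmer k (X j) c, hwa, hwc]
    have hbasic := distinct_occ_basic hkn hA hC (by omega) (by omega) hne hvc.symm
    obtain ⟨hij, ha0, hak, hc0, hck⟩ := hbasic
    have H2 := atMostTwo hk hB (a := a) (c := c) (by omega) (by omega) hne hvc.symm
    -- v does not end any string of X (hence none of Z)
    have heX0 : eF k X v = 0 := by
      unfold eF
      rw [Finset.card_eq_zero]
      ext i'
      simp only [Finset.mem_filter, Finset.mem_univ, true_and, Finset.notMem_empty, iff_false]
      intro hctr
      rcases H2 i' (n - k) (by omega) (hctr.trans hv.symm ▸ hctr) with h | h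
      · have := congrArg Prod.snd h
        simp only at this
        omega
      · have := congrArg Prod.snd h
        simp only at this
        omega
    -- Step 1: v occurs at least twice in Z
    have hstep1 : 2 ≤ (occF k Z v).card := by
      set e1 : Fin (k+1) → Bool := kmer (k+1) (X i) (a - 1) with he1
      set e2 : Fin (k+1) → Bool := kmer (k+1) (X j) (c - 1) with he2
      have hsuf1 : suf e1 = v := by
        rw [he1, suf_kmer]
        have hx : a - 1 + 1 = a := by omega
        rw [hx]
      have hsuf2 : suf e2 = v := by
        rw [he2, suf_kmer]
        have hx : c - 1 + 1 = c := by omega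
        rw [hx, hvc]
      rw [occF_card_suffix (by omega) Z v]
      by_cases he12 : e1 = e2
      · have h2 : 2 ≤ (occF (k+1) Z e1).card := by
          apply IH (a - 1) (by omega) i j (c - 1) e1 (by omega) (by omega) rfl he12.symm
          intro hpq
          exact hij (congrArg Prod.fst hpq)
        have hterm : (if suf e1 = v then (occF (k+1) Z e1).card else 0)
            ≤ ∑ w' : Fin (k+1) → Bool, (if suf w' = v then (occF (k+1) Z w').card else 0) :=
          Finset.single_le_sum
            (f := fun w' => if suf w' = v then (occF (k+1) Z w').card else 0)
            (fun _ _ => Nat.zero_le _) (Finset.mem_univ e1)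
        rw [if_pos hsuf1] at hterm
        omega
      · have h1 : 1 ≤ (occF (k+1) Z e1).card :=
          Finset.card_pos.2 (occZ_nonempty hY (by omega))
        have h2 : 1 ≤ (occF (k+1) Z e2).card :=
          Finset.card_pos.2 (occZ_nonempty hY (by omega))
        have hsub : ∑ w' ∈ ({e1, e2} : Finset (Fin (k+1) → Bool)),
              (if suf w' = v then (occF (k+1) Z w').card else 0)
            ≤ ∑ w' : Fin (k+1) → Bool, (if suf w' = v then (occF (k+1) Z w').card else 0) :=
          Finset.sum_le_sum_of_subset (Finset.subset_univ _)
        rw [Finset.sum_pair he12, if_pos hsuf1, if_pos hsuf2] at hsub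
        omega
    -- Step 2: translate to out-edges
    rw [occF_card_prefix (by omega) Z v, heF v, heX0] at hstep1
    -- Step 3: the only possible out-edge is w
    have hsum : ∑ w' : Fin (k+1) → Bool, (if pre w' = v then (occF (k+1) Z w').card else 0)
        = (if pre w = v then (occF (k+1) Z w).card else 0) := by
      apply Finset.sum_eq_single w
      · intro w' _ hw'
        by_cases hp : pre w' = v
        · rw [if_pos hp]
          by_contra hpos
          have hne0 : (occF (k+1) Z w').Nonempty := Finset.card_pos.1 (by omega)
          have : w' ∈ kmerSet m k X := by rw [← hY, mem_kmerSet_iff]; exact hne0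
          obtain ⟨i'', a'', ha'', he''⟩ := this
          have hocc : kmer k (X i'') a'' = v := by
            rw [← pre_kmer k (X i'') a'', ← he'', hp]
          rcases H2 i'' a'' (by omega) (hocc.trans hv.symm ▸ hocc) with h | h
          · apply hw'
            have h1 := congrArg Prod.fst h
            have h2 := congrArg Prod.snd h
            simp only at h1 h2
            rw [he'', h1, h2, hwa]
          · apply hw'
            have h1 := congrArg Prod.fst h
            have h2 := congrArg Prod.snd h
            simp only at h1 h2
            rw [he'', h1, h2, hwc]
        · rw [if_neg hp]
      · intro hw; exact absurd (Finset.mem_univ w) hw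
    rw [hsum, if_pos (by rw [← hwa, pre_kmer])] at hstep1
    omega

lemma edge_ge (hk : 1 ≤ k) (hkn : k < n)
    (hA : ¬ eventA m k X) (hB : ¬ eventB m k X) (hC : ¬ eventC m k X)
    (hY : kmerSet m k Z = kmerSet m k X)
    (heF : ∀ v : Fin k → Bool, eF k Z v = eF k X v)
    (w : Fin (k+1) → Bool) :
    (occF (k+1) X w).card ≤ (occF (k+1) Z w).card := by
  rcases Nat.eq_zero_or_pos (occF (k+1) X w).card with h0 | h0
  · omega
  have hle2 : (occF (k+1) X w).card ≤ 2 := by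
    by_contra h3
    push_neg at h3
    obtain ⟨p, hp, q, hq, r, hr, hpq, hpr, hqr⟩ := Finset.two_lt_card.1 h3
    rw [mem_occF] at hp hq hr
    have hpre : kmer k (X q.1) q.2 = kmer k (X p.1) p.2 := by
      rw [← pre_kmer k (X q.1) q.2, ← pre_kmer k (X p.1) p.2, hp.2, hq.2]
    have hne' : (p.1, p.2) ≠ (q.1, q.2) := by simpa using hpq
    have H2 := atMostTwo hk hB (i := p.1) (j := q.1) (a := p.2) (c := q.2)
      (by omega) (by omega) hne' hpre.symm
    have hrpre : kmer k (X r.1) r.2 = kmer k (X p.1) p.2 := by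
      rw [← pre_kmer k (X r.1) r.2, ← pre_kmer k (X p.1) p.2, hp.2, hr.2]
    rcases H2 r.1 r.2 (by omega) hrpre with h | h
    · exact hpr (by have := h.symm; simpa [Prod.ext_iff] using this)
    · exact hqr (by have := h.symm; simpa [Prod.ext_iff] using this)
  rcases Nat.lt_or_ge (occF (k+1) X w).card 2 with h1 | h1
  · have h2 : 1 ≤ (occF (k+1) Z w).card := by
      obtain ⟨p, hp⟩ := Finset.card_pos.1 h0
      rw [mem_occF] at hp
      have hne := occZ_nonempty (i := p.1) (a := p.2) hY hp.1
      rw [hp.2] at hne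
      exact Finset.card_pos.2 hne
    omega
  · obtain ⟨p, hp, q, hq, hpq⟩ := Finset.one_lt_card.1 h1
    rw [mem_occF] at hp hq
    have h2 := key_double hk hkn hA hB hC hY heF p.2 p.1 q.1 q.2 w hp.1 hq.1 hp.2 hq.2
      (by simpa using hpq)
    omega

lemma mult_eq_final (hk : 1 ≤ k) (hkn : k < n)
    (hA : ¬ eventA m k X) (hB : ¬ eventB m k X) (hC : ¬ eventC m k X)
    (hY : kmerSet m k Z = kmerSet m k X) (v : Fin k → Bool) :
    mult m k Z v = mult m k X v := by
  classical
  have heF : ∀ u : Fin k → Bool, eF k Z u = eF k X u := by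
    have hle : ∀ u ∈ (Finset.univ : Finset (Fin k → Bool)), eF k X u ≤ eF k Z u :=
      fun u _ => eX_le_eZ hkn hC hY u
    have hsum : ∑ u : Fin k → Bool, eF k X u = ∑ u : Fin k → Bool, eF k Z u := by
      rw [sum_eF, sum_eF]
    intro u
    exact ((Finset.sum_eq_sum_iff_of_le hle).1 hsum u (Finset.mem_univ u)).symm
  have hsF : ∀ u : Fin k → Bool, sF k Z u = sF k X u := by
    have hle : ∀ u ∈ (Finset.univ : Finset (Fin k → Bool)), sF k X u ≤ sF k Z u :=
      fun u _ => sX_le_sZ hkn hC hY u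
    have hsum : ∑ u : Fin k → Bool, sF k X u = ∑ u : Fin k → Bool, sF k Z u := by
      rw [sum_sF, sum_sF]
    intro u
    exact ((Finset.sum_eq_sum_iff_of_le hle).1 hsum u (Finset.mem_univ u)).symm
  have hedge : ∀ w : Fin (k+1) → Bool, (occF (k+1) X w).card = (occF (k+1) Z w).card := by
    have hle : ∀ w ∈ (Finset.univ : Finset (Fin (k+1) → Bool)),
        (occF (k+1) X w).card ≤ (occF (k+1) Z w).card :=
      fun w _ => edge_ge hk hkn hA hB hC hY heF w
    have hsum : ∑ w : Fin (k+1) → Bool, (occF (k+1) X w).card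
        = ∑ w : Fin (k+1) → Bool, (occF (k+1) Z w).card := by
      rw [sum_occF_card, sum_occF_card]
    intro w
    exact (Finset.sum_eq_sum_iff_of_le hle).1 hsum w (Finset.mem_univ w)
  rw [mult_eq_occF, mult_eq_occF, occF_card_suffix (by omega) Z v,
    occF_card_suffix (by omega) X v, hsF v]
  congr 1
  apply Finset.sum_congr rfl
  intro w _
  by_cases h : suf w = v
  · rw [if_pos h, if_pos h, hedge w]
  · rw [if_neg h, if_neg h]

end main
end MFD

/-- Lemma 2: if none of the events A, B, C occurs for `X`, then every family `X'`
with the same `(k+1)`-mer set assigns the same multiplicity as `X` to every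
length-`k` word (node of the de Bruijn graph). -/


theorem multiplicities_fully_determined
    (n m k : ℕ) (hk : 1 ≤ k) (hkn : k < n) (hm : 1 ≤ m)
    (X : Fin m → Fin n → Bool)
    (hA : ¬ eventA m k X) (hB : ¬ eventB m k X) (hC : ¬ eventC m k X) :
    ∀ X' : Fin m → Fin n → Bool, kmerSet m k X' = kmerSet m k X →
      ∀ v : Fin k → Bool, mult m k X' v = mult m k X v := by
  intro X' hY v
  exact MFD.mult_eq_final hk hkn hA hB hC hY v
end

section
/- Fix integers n, m, k with 1 ≤ k < n and m ≥ 1. Let X = (x_1,…,x_m) be a family of binary strings of length n such that all its k-mers are distinct, i.e., there is no pair (i,a) ≠ (j,b) with x_i(a) = x_j(b). Then for every family X' = (x'_1,…,x'_m) of m binary strings of length n with Y(X') = Y(X), the multiset {x'_1,…,x'_m} equals the multiset {x_1,…,x_m}; in particular Y(X) reconstructs X. -/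
/-- `Y(X)` reconstructs `X`: any family of `m` length-`n` strings with the same
`(k+1)`-mer set has the same underlying set of strings. -/
def reconstructs {n : ℕ} (m k : ℕ) (X : Fin m → Fin n → Bool) : Prop :=
  ∀ X' : Fin m → Fin n → Bool, kmerSet m k X' = kmerSet m k X → Set.range X' = Set.range X

lemma kmer_first {n k : ℕ} {x y : Fin n → Bool} {a b : ℕ}
    (h : kmer (k+1) x a = kmer (k+1) y b) : kmer k x a = kmer k y b := by
  funext t
  have := congrFun h ⟨t.val, Nat.lt_succ_of_lt t.isLt⟩
  simpa [kmer] using this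

lemma kmer_last {n k : ℕ} {x y : Fin n → Bool} {a b : ℕ}
    (h : kmer (k+1) x a = kmer (k+1) y b) : kmer k x (a+1) = kmer k y (b+1) := by
  funext t
  have := congrFun h ⟨t.val + 1, by omega⟩
  simp only [kmer] at this ⊢
  rw [show a + 1 + t.val = a + (t.val + 1) from by omega,
      show b + 1 + t.val = b + (t.val + 1) from by omega]
  exact this

/-- If all the `k`-mers of the family `X` are distinct (no pair `(i,a) ≠ (j,b)` with
`x_i(a) = x_j(b)`), then any family `X'` with the same `(k+1)`-mer set equals `X` as
a multiset of strings; in particular `Y(X)` reconstructs `X`. -/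
theorem distinct_kmers_implies_reconstruction
    (n m k : ℕ) (hk : 1 ≤ k) (hkn : k < n) (hm : 1 ≤ m)
    (X : Fin m → Fin n → Bool)
    (hdistinct : ¬ ∃ i j : Fin m, ∃ a b : ℕ,
      a + k ≤ n ∧ b + k ≤ n ∧ (i, a) ≠ (j, b) ∧ kmer k (X i) a = kmer k (X j) b) :
    (∀ X' : Fin m → Fin n → Bool, kmerSet m k X' = kmerSet m k X →
      Multiset.map X' Finset.univ.val = Multiset.map X Finset.univ.val) ∧
    reconstructs m k X := by
  have hdist : ∀ (i j : Fin m) (a b : ℕ), a + k ≤ n → b + k ≤ n →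
      kmer k (X i) a = kmer k (X j) b → (i, a) = (j, b) := by
    intro i j a b ha hb heq
    by_contra hne
    exact hdistinct ⟨i, j, a, b, ha, hb, hne, heq⟩
  -- main step: any X' with the same (k+1)-mer set is X composed with some map
  have main : ∀ X' : Fin m → Fin n → Bool, kmerSet m k X' = kmerSet m k X →
      ∀ i : Fin m, ∃ j : Fin m, X' i = X j := by
    intro X' hY i
    have h0 : kmer (k+1) (X' i) 0 ∈ kmerSet m k X' := ⟨i, 0, by omega, rfl⟩
    rw [hY] at h0
    obtain ⟨j, a, ha, heq⟩ := h0
    -- chain along positions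
    have chain : ∀ p : ℕ, p + (k+1) ≤ n →
        kmer (k+1) (X' i) p = kmer (k+1) (X j) (a + p) ∧ a + p + (k+1) ≤ n := by
      intro p
      induction p with
      | zero => intro _; exact ⟨heq, by omega⟩
      | succ p ih =>
        intro hp
        obtain ⟨ihq, ihn⟩ := ih (by omega)
        have hmem : kmer (k+1) (X' i) (p+1) ∈ kmerSet m k X' := ⟨i, p+1, hp, rfl⟩
        rw [hY] at hmem
        obtain ⟨j', b, hb, heq'⟩ := hmem
        have h1 : kmer k (X' i) (p+1) = kmer k (X j) (a + p + 1) := kmer_last ihq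
        have h2 : kmer k (X' i) (p+1) = kmer k (X j') b := kmer_first heq'
        have h3 : kmer k (X j) (a + p + 1) = kmer k (X j') b := h1 ▸ h2
        have h4 := hdist j j' (a + p + 1) b (by omega) (by omega) h3
        have hj : j = j' := (Prod.mk.injEq _ _ _ _ ▸ h4).1
        have hab : a + p + 1 = b := (Prod.mk.injEq _ _ _ _ ▸ h4).2
        constructor
        · rw [show a + (p + 1) = b from by omega, hj]
          exact heq'
        · omega
    -- alignment must start at 0
    have ha0 : a = 0 := by
      have := (chain (n - (k+1)) (by omega)).2
      omega
    refine ⟨j, ?_⟩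
    funext t
    rcases t with ⟨t, ht⟩
    by_cases htk : t + (k+1) ≤ n
    · have := congrFun (chain t htk).1 ⟨0, by omega⟩
      simp only [kmer, ha0, Nat.add_zero, Nat.zero_add] at this
      simpa [_root_.get, ht] using this
    · have hq := (chain (n - (k+1)) (by omega)).1
      have := congrFun hq ⟨t - (n - (k+1)), by omega⟩
      simp only [kmer, ha0, Nat.zero_add] at this
      rw [show n - (k+1) + (t - (n - (k+1))) = t from by omega] at this
      simpa [_root_.get, ht] using this
  -- build σ and show surjectivity
  have key : ∀ X' : Fin m → Fin n → Bool, kmerSet m k X' = kmerSet m k X →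
      ∃ σ : Fin m → Fin m, Function.Bijective σ ∧ X' = X ∘ σ := by
    intro X' hY
    choose σ hσ using main X' hY
    have hsurj : Function.Surjective σ := by
      intro j
      have h0 : kmer (k+1) (X j) 0 ∈ kmerSet m k X := ⟨j, 0, by omega, rfl⟩
      rw [← hY] at h0
      obtain ⟨i, b, hb, heq⟩ := h0
      have h1 : kmer k (X j) 0 = kmer k (X' i) b := kmer_first heq
      rw [hσ i] at h1
      have h4 := hdist j (σ i) 0 b (by omega) (by omega) h1
      exact ⟨i, ((Prod.mk.injEq _ _ _ _ ▸ h4).1).symm⟩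
    exact ⟨σ, Finite.surjective_iff_bijective.mp hsurj, funext hσ⟩
  constructor
  · intro X' hY
    obtain ⟨σ, hbij, hXσ⟩ := key X' hY
    have : Multiset.map σ Finset.univ.val = Finset.univ.val := by
      have hnd : (Multiset.map σ Finset.univ.val).Nodup :=
        Finset.univ.nodup.map hbij.1
      have : (⟨Multiset.map σ Finset.univ.val, hnd⟩ : Finset (Fin m)) = Finset.univ := by
        apply Finset.eq_univ_of_card
        simp [Finset.card]
      exact congrArg Finset.val this
    calc Multiset.map X' Finset.univ.val
        = Multiset.map X (Multiset.map σ Finset.univ.val) := by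
          rw [Multiset.map_map, hXσ]
      _ = Multiset.map X Finset.univ.val := by rw [this]
  · intro X' hY
    obtain ⟨σ, hbij, hXσ⟩ := key X' hY
    rw [hXσ, Set.range_comp, hbij.2.range_eq, Set.image_univ]
end
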